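/- With the restricted ultrapower setup, the canonical embedding F : K → N = ∏_𝔛 K / U given by F(a) = [f_a], where f_a is the constant function with value a, is an elementary embedding; consequently N ⊨ T. -/

import Mathlib

/-!
Łoś's theorem holds for the restricted ultrapower, by induction on formulas, because
everything the induction needs is coded in `𝔛`. As the elementary diagram of `K₀ ≅ K` is
coded, `{a | K ⊨ φ[f₀(a), …, fₖ(a)]}` is arithmetical in parameters from `𝔛` whenever
the `ϱ ∘ fᵢ` are, so it lies in `𝔛` by arithmetical comprehension; likewise the pointwise
value of a term, and, in the quantifier step, the least counterexample, are coded
functions. The ultrafilter `U` decides every set of `𝔛`: a set meeting all members of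
`U` in unbounded sets generates with `U` a filter, proper because `P_𝔛` contains the
disjoint evens and odds, so it lies in `U` by maximality. For constant functions Łoś's
theorem says that `F` is elementary, and `N ⊨ T` then follows from `K ≅ K₀ ⊨ T`.
-/

namespace Paper

/-! ### Syntax of (second-order) arithmetic.

Terms of the language `L_A = {0, 1, +, ·, <}`, with number variables indexed by `ℕ`.
Formulas also allow atomic formulas `t ∈ X_k` (membership in a set variable) and
set quantifiers `allS`; first-order formulas are those avoiding both. -/

inductive PTerm where
  | var : ℕ → PTerm
  | zero : PTerm
  | one : PTerm
  | add : PTerm → PTerm → PTerm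
  | mul : PTerm → PTerm → PTerm

inductive Fml where
  | eq : PTerm → PTerm → Fml
  | lt : PTerm → PTerm → Fml
  | mem : PTerm → ℕ → Fml
  | not : Fml → Fml
  | imp : Fml → Fml → Fml
  | all : ℕ → Fml → Fml
  | allS : ℕ → Fml → Fml

def Fml.and (φ ψ : Fml) : Fml := .not (.imp φ (.not ψ))
def Fml.or (φ ψ : Fml) : Fml := .imp (.not φ) ψ
def Fml.iff (φ ψ : Fml) : Fml := (Fml.imp φ ψ).and (Fml.imp ψ φ)
def Fml.ex (x : ℕ) (φ : Fml) : Fml := .not (.all x (.not φ))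
def Fml.exS (k : ℕ) (φ : Fml) : Fml := .not (.allS k (.not φ))

/-- A structure for the language `{0, 1, +, ·, <}` on a carrier `M`
(bundled, so that several structures can live on the same carrier). -/
structure AStr (M : Type) where
  zero : M
  one : M
  add : M → M → M
  mul : M → M → M
  lt : M → M → Prop

/-- The standard model of arithmetic. -/
def natStr : AStr ℕ := ⟨0, 1, (· + ·), (· * ·), (· < ·)⟩

namespace PTerm

def vars : PTerm → Finset ℕ
  | var n => {n}
  | zero => ∅
  | one => ∅
  | add t u => t.vars ∪ u.vars
  | mul t u => t.vars ∪ u.vars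

/-- Substitution of a term `r` for the variable `x` (used only with `r` closed or
with `vars r ⊆ {x}`, in which case it is capture-free). -/
def subst (x : ℕ) (r : PTerm) : PTerm → PTerm
  | var n => if n = x then r else var n
  | zero => zero
  | one => one
  | add t u => add (subst x r t) (subst x r u)
  | mul t u => mul (subst x r t) (subst x r u)

def val {M : Type} (S : AStr M) (v : ℕ → M) : PTerm → M
  | var n => v n
  | zero => S.zero
  | one => S.one
  | add t u => S.add (t.val S v) (u.val S v)
  | mul t u => S.mul (t.val S v) (u.val S v)

end PTerm

namespace Fml

/-- Free number variables. -/
def freeN : Fml → Finset ℕ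
  | eq t u => t.vars ∪ u.vars
  | lt t u => t.vars ∪ u.vars
  | mem t _ => t.vars
  | not φ => φ.freeN
  | imp φ ψ => φ.freeN ∪ ψ.freeN
  | all x φ => φ.freeN.erase x
  | allS _ φ => φ.freeN

/-- Substitution of a term `r` for the (free) variable `x`. -/
def substN (x : ℕ) (r : PTerm) : Fml → Fml
  | eq t u => eq (PTerm.subst x r t) (PTerm.subst x r u)
  | lt t u => lt (PTerm.subst x r t) (PTerm.subst x r u)
  | mem t k => mem (PTerm.subst x r t) k
  | not φ => not (substN x r φ)
  | imp φ ψ => imp (substN x r φ) (substN x r ψ)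
  | all y φ => if y = x then all y φ else all y (substN x r φ)
  | allS k φ => allS k (substN x r φ)

/-- First-order formulas: no set variables, no set quantifiers. -/
def IsFO : Fml → Prop
  | eq _ _ => True
  | lt _ _ => True
  | mem _ _ => False
  | not φ => φ.IsFO
  | imp φ ψ => φ.IsFO ∧ ψ.IsFO
  | all _ φ => φ.IsFO
  | allS _ _ => False

/-- Arithmetical formulas: set variables allowed as parameters, but no set quantifiers. -/
def IsArith : Fml → Prop
  | eq _ _ => True
  | lt _ _ => True
  | mem _ _ => True
  | not φ => φ.IsArith
  | imp φ ψ => φ.IsArith ∧ ψ.IsArith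
  | all _ φ => φ.IsArith
  | allS _ _ => False

end Fml

/-! ### Satisfaction -/

/-- Satisfaction for a second-order structure `(M, 𝔛)`: number quantifiers range over `M`,
set quantifiers range over `𝔛`. -/
def Sat {M : Type} (S : AStr M) (𝔛 : Set (Set M)) : (ℕ → M) → (ℕ → Set M) → Fml → Prop
  | v, _, .eq t u => t.val S v = u.val S v
  | v, _, .lt t u => S.lt (t.val S v) (u.val S v)
  | v, w, .mem t k => t.val S v ∈ w k
  | v, w, .not φ => ¬ Sat S 𝔛 v w φ
  | v, w, .imp φ ψ => Sat S 𝔛 v w φ → Sat S 𝔛 v w ψ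
  | v, w, .all x φ => ∀ a : M, Sat S 𝔛 (Function.update v x a) w φ
  | v, w, .allS k φ => ∀ X ∈ 𝔛, Sat S 𝔛 v (Function.update w k X) φ

/-- First-order satisfaction. -/
def SatFO {M : Type} (S : AStr M) (v : ℕ → M) (φ : Fml) : Prop :=
  Sat S Set.univ v (fun _ => ∅) φ

/-- `M ⊨ T` for a first-order theory `T`. -/
def ModelsT {M : Type} (S : AStr M) (T : Set Fml) : Prop :=
  ∀ φ ∈ T, ∀ v, SatFO S v φ

/-- Semantic consequence (equivalently, by the completeness theorem, provability). -/
def Proves (T : Set Fml) (φ : Fml) : Prop :=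
  ∀ (M : Type) (S : AStr M), ModelsT S T → ∀ v, SatFO S v φ

/-- Consistency (equivalently, by the completeness theorem, having a model). -/
def ConsistentT (T : Set Fml) : Prop :=
  ∃ (M : Type) (S : AStr M), ModelsT S T

def IsFOSentence (φ : Fml) : Prop := φ.IsFO ∧ φ.freeN = ∅

/-- Completeness of a theory. -/
def CompleteT (T : Set Fml) : Prop :=
  ∀ φ, IsFOSentence φ → (Proves T φ ∨ Proves T φ.not)

/-! ### Peano arithmetic -/

def numeral : ℕ → PTerm
  | 0 => .zero
  | n + 1 => .add (numeral n) .one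

def univClosure (φ : Fml) : Fml := (φ.freeN.sort (· ≤ ·)).foldr Fml.all φ

/-- The induction axiom for `φ` in the variable `x` (before taking universal closure). -/
def indFml (φ : Fml) (x : ℕ) : Fml :=
  .imp ((φ.substN x .zero).and (.all x (.imp φ (φ.substN x (.add (.var x) .one)))))
    (.all x φ)

/-- The axioms of first-order Peano arithmetic `PA`. -/
def PAax : Set Fml :=
  {Fml.all 0 (.not (.eq (.add (.var 0) .one) .zero)),
   Fml.all 0 (.all 1 (.imp (.eq (.add (.var 0) .one) (.add (.var 1) .one))
     (.eq (.var 0) (.var 1)))),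
   Fml.all 0 (.eq (.add (.var 0) .zero) (.var 0)),
   Fml.all 0 (.all 1 (.eq (.add (.var 0) (.add (.var 1) .one))
     (.add (.add (.var 0) (.var 1)) .one))),
   Fml.all 0 (.eq (.mul (.var 0) .zero) .zero),
   Fml.all 0 (.all 1 (.eq (.mul (.var 0) (.add (.var 1) .one))
     (.add (.mul (.var 0) (.var 1)) (.var 0)))),
   Fml.all 0 (.all 1 (Fml.iff (.lt (.var 0) (.var 1))
     (Fml.ex 2 (.eq (.add (.var 0) (.add (.var 2) .one)) (.var 1)))))} ∪
  {ψ | ∃ φ x, Fml.IsFO φ ∧ ψ = univClosure (indFml φ x)}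

/-! ### Gödel coding -/

/-- The Cantor pairing function (the canonical pairing `⟨·,·⟩`). -/
def cpair (a b : ℕ) : ℕ := (a + b) * (a + b + 1) / 2 + a

def PTerm.code : PTerm → ℕ
  | .var n => cpair 0 n
  | .zero => cpair 1 0
  | .one => cpair 2 0
  | .add t u => cpair 3 (cpair t.code u.code)
  | .mul t u => cpair 4 (cpair t.code u.code)

def Fml.code : Fml → ℕ
  | .eq t u => cpair 5 (cpair t.code u.code)
  | .lt t u => cpair 6 (cpair t.code u.code)
  | .not φ => cpair 7 φ.code
  | .imp φ ψ => cpair 8 (cpair φ.code ψ.code)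
  | .all x φ => cpair 9 (cpair x φ.code)
  | .mem t k => cpair 10 (cpair t.code k)
  | .allS k φ => cpair 11 (cpair k φ.code)

/-- A theory identified with its set of Gödel codes. -/
def theoryCode (T : Set Fml) : Set ℕ := Fml.code '' T

/-! ### The arithmetical hierarchy (syntactic classes) -/

inductive IsDelta0 : Fml → Prop
  | eq (t u) : IsDelta0 (.eq t u)
  | lt (t u) : IsDelta0 (.lt t u)
  | mem (t k) : IsDelta0 (.mem t k)
  | not {φ} : IsDelta0 φ → IsDelta0 φ.not
  | imp {φ ψ} : IsDelta0 φ → IsDelta0 ψ → IsDelta0 (φ.imp ψ)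
  | ball {φ} (x t) : x ∉ PTerm.vars t → IsDelta0 φ →
      IsDelta0 (.all x (.imp (.lt (.var x) t) φ))

def IsSigma01 (φ : Fml) : Prop := ∃ x ψ, IsDelta0 ψ ∧ φ = Fml.ex x ψ

def IsPi01 (φ : Fml) : Prop := ∃ x ψ, IsDelta0 ψ ∧ φ = Fml.all x ψ

/-! ### Subsystems of second-order arithmetic, semantically -/

/-- The basic axioms (`PA⁻`, a discretely ordered commutative semiring). -/
def PAminusSem {M : Type} (S : AStr M) : Prop :=
  (∀ a b c : M, S.add a (S.add b c) = S.add (S.add a b) c) ∧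
  (∀ a b : M, S.add a b = S.add b a) ∧
  (∀ a b c : M, S.mul a (S.mul b c) = S.mul (S.mul a b) c) ∧
  (∀ a b : M, S.mul a b = S.mul b a) ∧
  (∀ a b c : M, S.mul a (S.add b c) = S.add (S.mul a b) (S.mul a c)) ∧
  (∀ a : M, S.add a S.zero = a) ∧
  (∀ a : M, S.mul a S.zero = S.zero) ∧
  (∀ a : M, S.mul a S.one = a) ∧
  (∀ a b c : M, S.lt a b → S.lt b c → S.lt a c) ∧
  (∀ a : M, ¬ S.lt a a) ∧
  (∀ a b : M, S.lt a b ∨ a = b ∨ S.lt b a) ∧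
  (∀ a b c : M, S.lt a b → S.lt (S.add a c) (S.add b c)) ∧
  (∀ a b c : M, S.lt S.zero c → S.lt a b → S.lt (S.mul a c) (S.mul b c)) ∧
  (∀ a b : M, S.lt a b → ∃ c : M, S.add a c = b) ∧
  S.lt S.zero S.one ∧
  (∀ a : M, S.lt S.zero a → a = S.one ∨ S.lt S.one a) ∧
  (∀ a : M, a = S.zero ∨ S.lt S.zero a)

/-- `(M,𝔛)` satisfies the induction axiom for `φ` in the variable `x`
(with arbitrary number and set parameters). -/
def SatInd {M : Type} (S : AStr M) (𝔛 : Set (Set M)) (φ : Fml) (x : ℕ) : Prop :=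
  ∀ (v : ℕ → M) (w : ℕ → Set M), (∀ k, w k ∈ 𝔛) →
    (Sat S 𝔛 (Function.update v x S.zero) w φ ∧
      ∀ a, Sat S 𝔛 (Function.update v x a) w φ →
        Sat S 𝔛 (Function.update v x (S.add a S.one)) w φ) →
    ∀ a, Sat S 𝔛 (Function.update v x a) w φ

/-- `(M,𝔛) ⊨ RCA₀`: basic axioms, `Σ⁰₁` induction and `Δ⁰₁` comprehension. -/
def SatRCA0 {M : Type} (S : AStr M) (𝔛 : Set (Set M)) : Prop :=
  PAminusSem S ∧
  (∀ φ x, IsSigma01 φ → SatInd S 𝔛 φ x) ∧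
  (∀ φ ψ x, IsSigma01 φ → IsPi01 ψ →
    ∀ (v : ℕ → M) (w : ℕ → Set M), (∀ k, w k ∈ 𝔛) →
      (∀ a, Sat S 𝔛 (Function.update v x a) w φ ↔ Sat S 𝔛 (Function.update v x a) w ψ) →
      {a : M | Sat S 𝔛 (Function.update v x a) w φ} ∈ 𝔛)

/-- `(M,𝔛) ⊨ ACA₀`: basic axioms, the induction axiom and arithmetical comprehension. -/
def SatACA0 {M : Type} (S : AStr M) (𝔛 : Set (Set M)) : Prop :=
  PAminusSem S ∧
  (∀ X ∈ 𝔛, S.zero ∈ X → (∀ a, a ∈ X → S.add a S.one ∈ X) → ∀ a, a ∈ X) ∧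
  (∀ φ x, Fml.IsArith φ → ∀ (v : ℕ → M) (w : ℕ → Set M), (∀ k, w k ∈ 𝔛) →
    {a : M | Sat S 𝔛 (Function.update v x a) w φ} ∈ 𝔛)

/-! ### Arithmetization inside a model

All notions below unfold the standard (`Δ₀`/`Σ₁`) arithmetized definitions at the
meta-level, using the operations of a structure `S : AStr M`.  On models of `IΣ₁`
they agree with satisfaction of the corresponding arithmetic formulas. -/

namespace AStr

variable {M : Type} (S : AStr M)

/-- Interpretation of numerals. -/
def num : ℕ → M
  | 0 => S.zero
  | n + 1 => S.add (num n) S.one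

def le (a b : M) : Prop := S.lt a b ∨ a = b

def two : M := S.add S.one S.one

/-- `p = ⟨a,b⟩` for the Cantor pairing function: `2p = (a+b)(a+b+1) + 2a`. -/
def PairRel (p a b : M) : Prop :=
  S.mul S.two p = S.add (S.mul (S.add a b) (S.add (S.add a b) S.one)) (S.mul S.two a)

/-- `r = a mod m`. -/
def ModRel (a m r : M) : Prop := S.lt r m ∧ ∃ q, a = S.add (S.mul q m) r

/-- Gödel's β-function: `x = β(c, i)` where `c = ⟨a,b⟩` and `x = a mod (1 + (i+1)b)`. -/
def BetaRel (c i x : M) : Prop :=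
  ∃ a b, S.PairRel c a b ∧ S.ModRel a (S.add S.one (S.mul (S.add i S.one) b)) x

/-- `s` codes a sequence of length `l` (as `s = ⟨c, l⟩`). -/
def SeqLen (s l : M) : Prop := ∃ c, S.PairRel s c l

/-- The `i`-th entry of the sequence coded by `s` is `x`. -/
def SeqAt (s i x : M) : Prop := ∃ c l, S.PairRel s c l ∧ S.lt i l ∧ S.BetaRel c i x

/-- The fixed `Δ₀` coding formula `x ∈ y` for (bounded) sets:
`y = ⟨a,b⟩` and `a mod (1 + (x+1)b) = 1` with modulus `> 1`, and `x < y`. -/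
def MemRel (x y : M) : Prop :=
  S.lt x y ∧ ∃ a b, S.PairRel y a b ∧
    S.lt S.one (S.add S.one (S.mul (S.add x S.one) b)) ∧
    S.ModRel a (S.add S.one (S.mul (S.add x S.one) b)) S.one

/-- Tagged pairs, used for codes of syntax: `x = ⟨tag, payload⟩`. -/
def Node (x tag payload : M) : Prop := S.PairRel x tag payload

/-- `x` is the code of the variable `v`. -/
def VarC (v x : M) : Prop := S.Node x (S.num 0) v

def AddC (t u y : M) : Prop := ∃ p, S.PairRel p t u ∧ S.Node y (S.num 3) p
def MulC (t u y : M) : Prop := ∃ p, S.PairRel p t u ∧ S.Node y (S.num 4) p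
def EqC (t u y : M) : Prop := ∃ p, S.PairRel p t u ∧ S.Node y (S.num 5) p
def LtC (t u y : M) : Prop := ∃ p, S.PairRel p t u ∧ S.Node y (S.num 6) p
def NotC (x y : M) : Prop := S.Node y (S.num 7) x
def ImpC (x y z : M) : Prop := ∃ p, S.PairRel p x y ∧ S.Node z (S.num 8) p
def AllC (v x y : M) : Prop := ∃ p, S.PairRel p v x ∧ S.Node y (S.num 9) p

/-- `s` codes a construction sequence for terms. -/
def IsTermConSeq (s : M) : Prop :=
  ∀ i x, S.SeqAt s i x →
    (∃ v, S.VarC v x) ∨ S.Node x (S.num 1) (S.num 0) ∨ S.Node x (S.num 2) (S.num 0) ∨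
    (∃ j k y z, S.lt j i ∧ S.lt k i ∧ S.SeqAt s j y ∧ S.SeqAt s k z ∧
      (S.AddC y z x ∨ S.MulC y z x))

/-- `x` is a term code (in the sense of `M`, possibly nonstandard). -/
def TermCodeM (x : M) : Prop := ∃ s i, S.IsTermConSeq s ∧ S.SeqAt s i x

/-- `s` codes a construction sequence for (first-order) formulas. -/
def IsFmlConSeq (s : M) : Prop :=
  ∀ i x, S.SeqAt s i x →
    (∃ t u, S.TermCodeM t ∧ S.TermCodeM u ∧ (S.EqC t u x ∨ S.LtC t u x)) ∨
    (∃ j y, S.lt j i ∧ S.SeqAt s j y ∧ S.NotC y x) ∨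
    (∃ j k y z, S.lt j i ∧ S.lt k i ∧ S.SeqAt s j y ∧ S.SeqAt s k z ∧ S.ImpC y z x) ∨
    (∃ j v y, S.lt j i ∧ S.SeqAt s j y ∧ S.AllC v y x)

/-- `x` is a formula code (in the sense of `M`, possibly nonstandard). -/
def FmlCodeM (x : M) : Prop := ∃ s i, S.IsFmlConSeq s ∧ S.SeqAt s i x

/-- Construction sequences of pairs (term code, occurrence flag for the variable `v`). -/
def IsOccConSeq (v s : M) : Prop :=
  ∀ i p, S.SeqAt s i p → ∃ x f, S.PairRel p x f ∧
    ((S.VarC v x ∧ f = S.num 1) ∨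
     (∃ u, S.VarC u x ∧ u ≠ v ∧ f = S.num 0) ∨
     ((S.Node x (S.num 1) (S.num 0) ∨ S.Node x (S.num 2) (S.num 0)) ∧ f = S.num 0) ∨
     (∃ j k y z g h pj pk, S.lt j i ∧ S.lt k i ∧ S.SeqAt s j pj ∧ S.SeqAt s k pk ∧
       S.PairRel pj y g ∧ S.PairRel pk z h ∧ (S.AddC y z x ∨ S.MulC y z x) ∧
       ((f = S.num 1 ∧ (g = S.num 1 ∨ h = S.num 1)) ∨
        (f = S.num 0 ∧ g = S.num 0 ∧ h = S.num 0))))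

/-- `f = 1` iff the variable `v` occurs in the term coded by `t` (`f ∈ {0,1}`). -/
def OccT (v t f : M) : Prop :=
  ∃ s i p, S.IsOccConSeq v s ∧ S.SeqAt s i p ∧ S.PairRel p t f

/-- Construction sequences of pairs (formula code, freeness flag for the variable `v`). -/
def IsFreeConSeq (v s : M) : Prop :=
  ∀ i p, S.SeqAt s i p → ∃ x f, S.PairRel p x f ∧
    ((∃ t u, (S.EqC t u x ∨ S.LtC t u x) ∧
       ((f = S.num 1 ∧ (S.OccT v t (S.num 1) ∨ S.OccT v u (S.num 1))) ∨
        (f = S.num 0 ∧ S.OccT v t (S.num 0) ∧ S.OccT v u (S.num 0)))) ∨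
     (∃ j y g pj, S.lt j i ∧ S.SeqAt s j pj ∧ S.PairRel pj y g ∧ S.NotC y x ∧ f = g) ∨
     (∃ j k y z g h pj pk, S.lt j i ∧ S.lt k i ∧ S.SeqAt s j pj ∧ S.SeqAt s k pk ∧
       S.PairRel pj y g ∧ S.PairRel pk z h ∧ S.ImpC y z x ∧
       ((f = S.num 1 ∧ (g = S.num 1 ∨ h = S.num 1)) ∨
        (f = S.num 0 ∧ g = S.num 0 ∧ h = S.num 0))) ∨
     (∃ j w y g pj, S.lt j i ∧ S.SeqAt s j pj ∧ S.PairRel pj y g ∧ S.AllC w y x ∧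
       ((w = v ∧ f = S.num 0) ∨ (w ≠ v ∧ f = g))))

/-- `f = 1` iff the variable `v` is free in the formula coded by `φ`. -/
def FreeF (v φ f : M) : Prop :=
  ∃ s i p, S.IsFreeConSeq v s ∧ S.SeqAt s i p ∧ S.PairRel p φ f

/-- Construction sequences of pairs (term code, result of substituting `t` for `v`). -/
def IsSubTConSeq (v t s : M) : Prop :=
  ∀ i p, S.SeqAt s i p → ∃ x x', S.PairRel p x x' ∧
    ((S.VarC v x ∧ x' = t) ∨
     (∃ u, S.VarC u x ∧ u ≠ v ∧ x' = x) ∨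
     ((S.Node x (S.num 1) (S.num 0) ∨ S.Node x (S.num 2) (S.num 0)) ∧ x' = x) ∨
     (∃ j k y z y' z' pj pk, S.lt j i ∧ S.lt k i ∧ S.SeqAt s j pj ∧ S.SeqAt s k pk ∧
       S.PairRel pj y y' ∧ S.PairRel pk z z' ∧
       ((S.AddC y z x ∧ S.AddC y' z' x') ∨ (S.MulC y z x ∧ S.MulC y' z' x'))))

/-- Substitution of the term (code) `t` for the variable `v` in terms: `x' = x[t/v]`. -/
def SubT (v t x x' : M) : Prop :=
  ∃ s i p, S.IsSubTConSeq v t s ∧ S.SeqAt s i p ∧ S.PairRel p x x'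

/-- Construction sequences for capture-free substitution in formulas. -/
def IsSubFConSeq (v t s : M) : Prop :=
  ∀ i p, S.SeqAt s i p → ∃ x x', S.PairRel p x x' ∧
    ((∃ a b a' b', S.SubT v t a a' ∧ S.SubT v t b b' ∧
       ((S.EqC a b x ∧ S.EqC a' b' x') ∨ (S.LtC a b x ∧ S.LtC a' b' x'))) ∨
     (∃ j y y' pj, S.lt j i ∧ S.SeqAt s j pj ∧ S.PairRel pj y y' ∧
       S.NotC y x ∧ S.NotC y' x') ∨
     (∃ j k y z y' z' pj pk, S.lt j i ∧ S.lt k i ∧ S.SeqAt s j pj ∧ S.SeqAt s k pk ∧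
       S.PairRel pj y y' ∧ S.PairRel pk z z' ∧ S.ImpC y z x ∧ S.ImpC y' z' x') ∨
     (∃ w y, S.AllC w y x ∧
       ((w = v ∧ x' = x) ∨
        (w ≠ v ∧ (S.OccT w t (S.num 0) ∨ S.FreeF v y (S.num 0)) ∧
          ∃ j y' pj, S.lt j i ∧ S.SeqAt s j pj ∧ S.PairRel pj y y' ∧ S.AllC w y' x'))))

/-- Capture-free substitution in formulas: `x' = x[t/v]`, with `t` substitutable for `v`. -/
def SubF (v t x x' : M) : Prop :=
  ∃ s i p, S.IsSubFConSeq v t s ∧ S.SeqAt s i p ∧ S.PairRel p x x'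

/-- `x` is (the code of) a generalization `∀v₁ ⋯ ∀vₖ y` of `y`. -/
def GenOf (y x : M) : Prop :=
  ∃ s i, S.SeqAt s (S.num 0) y ∧ S.SeqAt s i x ∧
    ∀ j z z', S.SeqAt s j z → S.SeqAt s (S.add j S.one) z' → S.le (S.add j S.one) i →
      ∃ v, S.AllC v z z'

/-- Codes of instances of the logical axiom schemes (a Hilbert-style calculus with
modus ponens as the only rule; axioms are taken together with their generalizations). -/
def LogAxCore (x : M) : Prop :=
  -- A1 : a → (b → a)
  (∃ a b y, S.FmlCodeM a ∧ S.FmlCodeM b ∧ S.ImpC b a y ∧ S.ImpC a y x) ∨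
  -- A2 : (a → (b → c)) → ((a → b) → (a → c))
  (∃ a b c bc abc ab ac r, S.FmlCodeM a ∧ S.FmlCodeM b ∧ S.FmlCodeM c ∧
    S.ImpC b c bc ∧ S.ImpC a bc abc ∧ S.ImpC a b ab ∧ S.ImpC a c ac ∧
    S.ImpC ab ac r ∧ S.ImpC abc r x) ∨
  -- A3 : (¬b → ¬a) → (a → b)
  (∃ a b na nb l r, S.FmlCodeM a ∧ S.FmlCodeM b ∧ S.NotC a na ∧ S.NotC b nb ∧
    S.ImpC nb na l ∧ S.ImpC a b r ∧ S.ImpC l r x) ∨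
  -- A4 : ∀v a → a[t/v]
  (∃ v t a a' al, S.TermCodeM t ∧ S.FmlCodeM a ∧ S.AllC v a al ∧ S.SubF v t a a' ∧
    S.ImpC al a' x) ∨
  -- A5 : ∀v (a → b) → (∀v a → ∀v b)
  (∃ v a b ab alab ala alb r, S.FmlCodeM a ∧ S.FmlCodeM b ∧ S.ImpC a b ab ∧
    S.AllC v ab alab ∧ S.AllC v a ala ∧ S.AllC v b alb ∧ S.ImpC ala alb r ∧
    S.ImpC alab r x) ∨
  -- A6 : a → ∀v a, for v not free in a
  (∃ v a ala, S.FmlCodeM a ∧ S.FreeF v a (S.num 0) ∧ S.AllC v a ala ∧ S.ImpC a ala x) ∨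
  -- E1 : t = t
  (∃ t, S.TermCodeM t ∧ S.EqC t t x) ∨
  -- E2 : u = w → w = u (variables)
  (∃ u w vu vw e1 e2, S.VarC u vu ∧ S.VarC w vw ∧ S.EqC vu vw e1 ∧ S.EqC vw vu e2 ∧
    S.ImpC e1 e2 x) ∨
  -- E3 : u = w → (w = z → u = z) (variables)
  (∃ u w z vu vw vz e1 e2 e3 r, S.VarC u vu ∧ S.VarC w vw ∧ S.VarC z vz ∧
    S.EqC vu vw e1 ∧ S.EqC vw vz e2 ∧ S.EqC vu vz e3 ∧ S.ImpC e2 e3 r ∧ S.ImpC e1 r x) ∨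
  -- E4 : congruence of +, ·, < with respect to = (variables)
  (∃ u1 w1 u2 w2 a1 b1 a2 b2 e1 e2 s1 s2 es r,
    S.VarC u1 a1 ∧ S.VarC w1 b1 ∧ S.VarC u2 a2 ∧ S.VarC w2 b2 ∧
    S.EqC a1 b1 e1 ∧ S.EqC a2 b2 e2 ∧
    ((S.AddC a1 a2 s1 ∧ S.AddC b1 b2 s2 ∧ S.EqC s1 s2 es) ∨
     (S.MulC a1 a2 s1 ∧ S.MulC b1 b2 s2 ∧ S.EqC s1 s2 es) ∨
     (S.LtC a1 a2 s1 ∧ S.LtC b1 b2 s2 ∧ S.ImpC s1 s2 es)) ∧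
    S.ImpC e2 es r ∧ S.ImpC e1 r x) ∨
  -- E5 : congruence of = (variables)
  (∃ u1 w1 u2 w2 a1 b1 a2 b2 e1 e2 d1 d2 inner r,
    S.VarC u1 a1 ∧ S.VarC w1 b1 ∧ S.VarC u2 a2 ∧ S.VarC w2 b2 ∧
    S.EqC a1 b1 e1 ∧ S.EqC a2 b2 e2 ∧ S.EqC a1 a2 d1 ∧ S.EqC b1 b2 d2 ∧
    S.ImpC d1 d2 inner ∧ S.ImpC e2 inner r ∧ S.ImpC e1 r x)

/-- Logical axioms: generalizations of instances of the axiom schemes. -/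
def LogAx (x : M) : Prop := ∃ y, S.LogAxCore y ∧ S.GenOf y x

/-- `s` codes a proof of `φ` from the set `Γ ⊆ M` of (codes of) sentences:
every entry is a logical axiom, a member of `Γ`, or follows by modus ponens. -/
def ProofFrom (Γ : Set M) (s φ : M) : Prop :=
  (∃ i, S.SeqAt s i φ) ∧
  ∀ i x, S.SeqAt s i x →
    S.LogAx x ∨ x ∈ Γ ∨
    (∃ j k y z, S.lt j i ∧ S.lt k i ∧ S.SeqAt s j y ∧ S.SeqAt s k z ∧ S.ImpC y x z)

/-- Provability (in the sense of `M`) from the axiom set `Γ ⊆ M`. -/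
def ProvFrom (Γ : Set M) (φ : M) : Prop := ∃ s, S.ProofFrom Γ s φ

/-- `M ⊨ Con_Γ` : there is no (possibly nonstandard) proof of a contradiction from `Γ`. -/
def ConOf (Γ : Set M) : Prop :=
  ¬ ∃ φ nφ, S.NotC φ nφ ∧ S.ProvFrom Γ φ ∧ S.ProvFrom Γ nφ

/-- `M ⊨ Con_T` for a (standard) theory `T`: `M` thinks every finite subtheory
of `T` is consistent. -/
def SatConTheory (T : Set Fml) : Prop :=
  ∀ F : Finset Fml, ↑F ⊆ T → S.ConOf {x : M | ∃ φ ∈ F, x = S.num (Fml.code φ)}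

/-! ### Coded sets, standard systems, filters on `P_𝔛` -/

/-- `A` is unbounded in `M`. -/
def Unb (A : Set M) : Prop := ∀ b, ∃ a ∈ A, S.lt b a

/-- `P_𝔛`: the collection of unbounded sets in `𝔛` (a partial order under `⊆`). -/
def PX (𝔛 : Set (Set M)) : Set (Set M) := {A | A ∈ 𝔛 ∧ S.Unb A}

/-- The `a`-th slice `(A)_a = {b | ⟨a,b⟩ ∈ A}`. -/
def SliceAt (A : Set M) (a : M) : Set M := {b | ∃ p, S.PairRel p a b ∧ p ∈ A}

/-- A function `M → M` is coded in `𝔛` if its graph (via the canonical pairing)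
belongs to `𝔛`. -/
def CodedFun (𝔛 : Set (Set M)) (f : M → M) : Prop :=
  ∃ G ∈ 𝔛, ∀ a b, f a = b ↔ b ∈ S.SliceAt G a

/-- A family `F` of sets is definable (over `(M,𝔛)`) if `{a | (A)_a ∈ F} ∈ 𝔛`
for every `A ∈ 𝔛`. -/
def DefinableFam (𝔛 F : Set (Set M)) : Prop :=
  ∀ A ∈ 𝔛, {a : M | S.SliceAt A a ∈ F} ∈ 𝔛

/-- `F` is a complete family: every function coded in `𝔛` with bounded range is
constant on some member of `F`. -/
def CompleteOn (𝔛 F : Set (Set M)) : Prop :=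
  ∀ f : M → M, S.CodedFun 𝔛 f → (∃ b, ∀ a, S.lt (f a) b) →
    ∃ A ∈ F, ∀ x ∈ A, ∀ y ∈ A, f x = f y

/-- The standard system `SSy(M)`: standard parts of the `M`-coded sets. -/
def SSy : Set (Set ℕ) := {A | ∃ c : M, ∀ n : ℕ, (n ∈ A ↔ S.MemRel (S.num n) c)}

/-- `M` is nonstandard. -/
def Nonstd : Prop := ∃ a : M, ∀ n : ℕ, a ≠ S.num n

/-- `M` is recursively saturated: every recursive type (in the variable `0`, with
finitely many parameters assigned to the variables `1, …, k`) that is finitely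
realized in `M` is realized in `M`. -/
def RecSat : Prop :=
  ∀ (p : Set Fml) (k : ℕ) (par : ℕ → M),
    (∀ φ ∈ p, Fml.IsFO φ ∧ φ.freeN ⊆ Finset.range (k + 1)) →
    ComputablePred (fun n => ∃ φ ∈ p, Fml.code φ = n) →
    (∀ F : Finset Fml, ↑F ⊆ p →
      ∃ a : M, ∀ φ ∈ F, SatFO S (fun i => if i = 0 then a else par i) φ) →
    ∃ a : M, ∀ φ ∈ p, SatFO S (fun i => if i = 0 then a else par i) φ

/-- `c` is the least code of the (bounded) set `A`. -/
def IsLeastCode (A : Set M) (c : M) : Prop :=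
  (∀ x, S.MemRel x c ↔ x ∈ A) ∧ ∀ c', (∀ x, S.MemRel x c' ↔ x ∈ A) → S.le c c'

/-- `A* = {⟨A ∩ I_{<a}⟩ | a ∈ M}`, the set of least codes of initial segments of `A`. -/
def star (A : Set M) : Set M :=
  {c | ∃ a, S.IsLeastCode (A ∩ {b | S.lt b a}) c}

end AStr

/-! ### Filters and partial orders of sets -/

/-- A filter on a partial order `P` of sets, ordered by inclusion: a proper, nonempty,
upward closed, downward directed subset of `P`. -/
def IsFilterOn {α : Type} (P F : Set (Set α)) : Prop :=
  F ⊆ P ∧ F.Nonempty ∧ F ≠ P ∧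
  (∀ A ∈ F, ∀ B ∈ P, A ⊆ B → B ∈ F) ∧
  (∀ A ∈ F, ∀ B ∈ F, ∃ C ∈ F, C ⊆ A ∧ C ⊆ B)

/-- An ultrafilter on a partial order of sets: a maximal filter. -/
def IsUltraOn {α : Type} (P U : Set (Set α)) : Prop :=
  IsFilterOn P U ∧ ∀ F, IsFilterOn P F → U ⊆ F → F = U

/-- A principal filter on a partial order of sets. -/
def IsPrincipalOn {α : Type} (P U : Set (Set α)) : Prop :=
  ∃ A ∈ P, U = {B | B ∈ P ∧ A ⊆ B}

/-- The countable chain condition for a partial order `P` of sets (ordered by `⊆`):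
every uncountable subset contains two distinct compatible elements. -/
def CCCOn {α : Type} (P : Set (Set α)) : Prop :=
  ∀ A : Set (Set α), A ⊆ P → ¬A.Countable →
    ∃ X ∈ A, ∃ Y ∈ A, X ≠ Y ∧ ∃ Z ∈ P, Z ⊆ X ∧ Z ⊆ Y

/-- `𝔛` is a Boolean algebra of sets. -/
def IsBoolAlg {α : Type} (𝔛 : Set (Set α)) : Prop :=
  Set.univ ∈ 𝔛 ∧ ∅ ∈ 𝔛 ∧
  (∀ A ∈ 𝔛, ∀ B ∈ 𝔛, A ∪ B ∈ 𝔛) ∧ (∀ A ∈ 𝔛, ∀ B ∈ 𝔛, A ∩ B ∈ 𝔛) ∧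
  (∀ A ∈ 𝔛, Aᶜ ∈ 𝔛)

/-- A filter on the Boolean algebra `𝔛`. -/
def IsBAFilter {α : Type} (𝔛 F : Set (Set α)) : Prop :=
  F ⊆ 𝔛 ∧ F.Nonempty ∧ ∅ ∉ F ∧
  (∀ A ∈ F, ∀ B ∈ 𝔛, A ⊆ B → B ∈ F) ∧
  (∀ A ∈ F, ∀ B ∈ F, A ∩ B ∈ F)

/-- An ultrafilter on the Boolean algebra `𝔛`: a maximal filter. -/
def IsBAUltra {α : Type} (𝔛 F : Set (Set α)) : Prop :=
  IsBAFilter 𝔛 F ∧ ∀ G, IsBAFilter 𝔛 G → F ⊆ G → G = F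

/-! ### Scott sets -/

/-- Oracle partial recursive functions: partial recursive in the oracle `O`. -/
inductive RecursiveIn (O : ℕ →. ℕ) : (ℕ →. ℕ) → Prop
  | oracle : RecursiveIn O O
  | zero : RecursiveIn O (pure 0)
  | succ : RecursiveIn O Nat.succ
  | left : RecursiveIn O ↑fun n : ℕ => n.unpair.1
  | right : RecursiveIn O ↑fun n : ℕ => n.unpair.2
  | pair {f g} : RecursiveIn O f → RecursiveIn O g →
      RecursiveIn O fun n => Nat.pair <$> f n <*> g n
  | comp {f g} : RecursiveIn O f → RecursiveIn O g →
      RecursiveIn O fun n => g n >>= f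
  | prec {f g} : RecursiveIn O f → RecursiveIn O g →
      RecursiveIn O (Nat.unpaired fun a n =>
        n.rec (f a) fun y IH => do let i ← IH; g (Nat.pair a (Nat.pair y i)))
  | rfind {f} : RecursiveIn O f →
      RecursiveIn O fun a => Nat.rfind fun n => (fun m => m = 0) <$> f (Nat.pair a n)

/-- The characteristic function of a set of natural numbers. -/
noncomputable def chi (A : Set ℕ) : ℕ →. ℕ :=
  fun n => Part.some (@ite _ (n ∈ A) (Classical.propDecidable _) 1 0)

/-- Turing reducibility: `B ≤_T A`. -/
def TuringLe (B A : Set ℕ) : Prop := RecursiveIn (chi A) (chi B)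

/-- A set of naturals coding a binary tree (codes of finite binary strings,
closed under initial segments). -/
def IsTreeCode (T : Set ℕ) : Prop :=
  (∀ n ∈ T, ∃ l : List Bool, Encodable.encode l = n) ∧
  (∀ l₁ l₂ : List Bool, l₁ <+: l₂ → Encodable.encode l₂ ∈ T → Encodable.encode l₁ ∈ T)

/-- `B` (as the characteristic function of a branch) is an infinite branch of the
binary tree coded by `T`. -/
def IsBranchThrough (B T : Set ℕ) : Prop :=
  ∀ n : ℕ, ∃ l : List Bool, l.length = n ∧
    (∀ i : Fin l.length, (l.get i = true ↔ (i : ℕ) ∈ B)) ∧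
    Encodable.encode l ∈ T

/-- A Scott set: a nonempty Boolean algebra of subsets of `ω` closed under relative
recursion and containing an infinite branch of every infinite binary tree coded in it. -/
def IsScottSet (𝔛 : Set (Set ℕ)) : Prop :=
  𝔛.Nonempty ∧
  (∀ A ∈ 𝔛, ∀ B ∈ 𝔛, A ∪ B ∈ 𝔛) ∧
  (∀ A ∈ 𝔛, Aᶜ ∈ 𝔛) ∧
  (∀ A ∈ 𝔛, ∀ B : Set ℕ, TuringLe B A → B ∈ 𝔛) ∧
  (∀ T ∈ 𝔛, IsTreeCode T → T.Infinite → ∃ B ∈ 𝔛, IsBranchThrough B T)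

/-- The sets represented in the theory `T`. -/
def repSet (T : Set Fml) : Set (Set ℕ) :=
  {A | ∃ φ : Fml, Fml.IsFO φ ∧ φ.freeN ⊆ {0} ∧
    ∀ n : ℕ, (n ∈ A → Proves T (φ.substN 0 (numeral n))) ∧
      (n ∉ A → Proves T (Fml.not (φ.substN 0 (numeral n))))}

/-- Martin's axiom. -/
def MartinsAxiom : Prop :=
  ∀ (P : Type) (_ : PartialOrder P),
    (∀ A : Set P, ¬A.Countable → ∃ x ∈ A, ∃ y ∈ A, x ≠ y ∧ ∃ z, z ≤ x ∧ z ≤ y) →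
    ∀ 𝒟 : Set (Set P), (∀ D ∈ 𝒟, ∀ x : P, ∃ y ∈ D, y ≤ x) →
      Cardinal.mk 𝒟 < Cardinal.continuum →
      ∃ F : Set P, F.Nonempty ∧ (∀ x ∈ F, ∀ y, x ≤ y → y ∈ F) ∧
        (∀ x ∈ F, ∀ y ∈ F, ∃ z ∈ F, z ≤ x ∧ z ≤ y) ∧
        ∀ D ∈ 𝒟, (F ∩ D).Nonempty

/-! ### Free variables and substitution -/

namespace PTerm

theorem val_congr {M : Type} (S : AStr M) {v v' : ℕ → M} :
    ∀ t : PTerm, (∀ i ∈ t.vars, v i = v' i) → t.val S v = t.val S v'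
  | var n, h => h n (by simp [vars])
  | zero, _ => rfl
  | one, _ => rfl
  | add t u, h | mul t u, h => by
      simp only [vars, Finset.mem_union] at h
      simp only [val, val_congr S t fun i hi => h i (.inl hi),
        val_congr S u fun i hi => h i (.inr hi)]

theorem val_update_of_notMem {M : Type} (S : AStr M) {t : PTerm} {x : ℕ} (hx : x ∉ t.vars)
    (v : ℕ → M) (b : M) : t.val S (Function.update v x b) = t.val S v :=
  val_congr S t fun _ hi => Function.update_of_ne (ne_of_mem_of_not_mem hi hx) _ _

def substVars (τ : ℕ → PTerm) : PTerm → PTerm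
  | var n => τ n
  | zero => zero
  | one => one
  | add t u => add (t.substVars τ) (u.substVars τ)
  | mul t u => mul (t.substVars τ) (u.substVars τ)

theorem val_substVars {M : Type} (S : AStr M) (τ : ℕ → PTerm) (v : ℕ → M) :
    ∀ t : PTerm, (t.substVars τ).val S v = t.val S (fun i => (τ i).val S v)
  | var _ => rfl
  | zero => rfl
  | one => rfl
  | add t u | mul t u => by
      simp only [substVars, val, val_substVars S τ v t, val_substVars S τ v u]

end PTerm

theorem numeral_val {M : Type} (S : AStr M) (v : ℕ → M) (n : ℕ) :
    (numeral n).val S v = S.num n := by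
  induction n with
  | zero => rfl
  | succ n ih => simp only [numeral, PTerm.val, AStr.num, ih]

namespace Fml

theorem sat_congr {M : Type} (S : AStr M) (𝔛 : Set (Set M)) :
    ∀ (φ : Fml) {v v' : ℕ → M} (w : ℕ → Set M), (∀ i ∈ φ.freeN, v i = v' i) →
      (Sat S 𝔛 v w φ ↔ Sat S 𝔛 v' w φ)
  | eq t u, _, _, _, h | lt t u, _, _, _, h => by
      simp only [freeN, Finset.mem_union] at h
      simp only [Sat, PTerm.val_congr S t fun i hi => h i (.inl hi),
        PTerm.val_congr S u fun i hi => h i (.inr hi)]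
  | mem t k, _, _, _, h => by simp only [Sat, PTerm.val_congr S t h]
  | not φ, _, _, w, h => not_congr (sat_congr S 𝔛 φ w h)
  | imp φ ψ, _, _, w, h => by
      simp only [freeN, Finset.mem_union] at h
      exact imp_congr (sat_congr S 𝔛 φ w fun i hi => h i (.inl hi))
        (sat_congr S 𝔛 ψ w fun i hi => h i (.inr hi))
  | all x φ, v, v', w, h => forall_congr' fun a => sat_congr S 𝔛 φ w fun i hi => by
      by_cases hix : i = x
      · simp [hix]
      · simpa [hix] using h i (Finset.mem_erase.mpr ⟨hix, hi⟩)
  | allS k φ, _, _, _, h => forall₂_congr fun X _ => sat_congr S 𝔛 φ _ h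

theorem satFO_congr {M : Type} (S : AStr M) (φ : Fml) {v v' : ℕ → M}
    (h : ∀ i ∈ φ.freeN, v i = v' i) : SatFO S v φ ↔ SatFO S v' φ :=
  sat_congr S _ φ _ h

def renameSets (τ : ℕ → ℕ) : Fml → Fml
  | eq t u => eq t u
  | lt t u => lt t u
  | mem t k => mem t (τ k)
  | not φ => not (φ.renameSets τ)
  | imp φ ψ => imp (φ.renameSets τ) (ψ.renameSets τ)
  | all x φ => all x (φ.renameSets τ)
  | allS k φ => allS (τ k) (φ.renameSets τ)

theorem IsArith.renameSets (τ : ℕ → ℕ) : ∀ {φ : Fml}, φ.IsArith → (φ.renameSets τ).IsArith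
  | eq _ _, _ | lt _ _, _ | mem _ _, _ => trivial
  | not φ, h | all _ φ, h => IsArith.renameSets τ (φ := φ) h
  | imp φ ψ, h => ⟨IsArith.renameSets τ (φ := φ) h.1, IsArith.renameSets τ (φ := ψ) h.2⟩

theorem sat_renameSets {M : Type} (S : AStr M) (𝔛 : Set (Set M)) (τ : ℕ → ℕ) :
    ∀ {φ : Fml}, φ.IsArith → ∀ (v : ℕ → M) (w : ℕ → Set M),
      (Sat S 𝔛 v w (φ.renameSets τ) ↔ Sat S 𝔛 v (w ∘ τ) φ)
  | eq _ _, _, _, _ | lt _ _, _, _, _ | mem _ _, _, _, _ => Iff.rfl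
  | not φ, h, v, w => not_congr (sat_renameSets S 𝔛 τ (φ := φ) h v w)
  | imp φ ψ, h, v, w => imp_congr (sat_renameSets S 𝔛 τ (φ := φ) h.1 v w)
      (sat_renameSets S 𝔛 τ (φ := ψ) h.2 v w)
  | all _ φ, h, _, w => forall_congr' fun _ => sat_renameSets S 𝔛 τ (φ := φ) h _ w

/-- Capture is avoided by renaming each bound variable apart from the substituted terms. -/
theorem exists_sat_substVars {M : Type} (S : AStr M) (𝔛 : Set (Set M)) :
    ∀ (φ : Fml), φ.IsArith → ∀ τ : ℕ → PTerm, ∃ φ' : Fml, φ'.IsArith ∧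
      ∀ (v : ℕ → M) (w : ℕ → Set M),
        Sat S 𝔛 v w φ' ↔ Sat S 𝔛 (fun i => (τ i).val S v) w φ
  | eq t u, _, τ => ⟨eq (t.substVars τ) (u.substVars τ), trivial, fun v w => by
      simp only [Sat, PTerm.val_substVars]⟩
  | lt t u, _, τ => ⟨lt (t.substVars τ) (u.substVars τ), trivial, fun v w => by
      simp only [Sat, PTerm.val_substVars]⟩
  | mem t k, _, τ => ⟨mem (t.substVars τ) k, trivial, fun v w => by
      simp only [Sat, PTerm.val_substVars]⟩
  | not φ, h, τ => by
      obtain ⟨φ', h', e⟩ := exists_sat_substVars S 𝔛 φ h τ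
      exact ⟨not φ', h', fun v w => not_congr (e v w)⟩
  | imp φ ψ, h, τ => by
      obtain ⟨φ', h₁, e₁⟩ := exists_sat_substVars S 𝔛 φ h.1 τ
      obtain ⟨ψ', h₂, e₂⟩ := exists_sat_substVars S 𝔛 ψ h.2 τ
      exact ⟨imp φ' ψ', ⟨h₁, h₂⟩, fun v w => imp_congr (e₁ v w) (e₂ v w)⟩
  | all x φ, h, τ => by
      set y := φ.freeN.sup (fun i => (τ i).vars.sup id) + 1
      have hy : ∀ i ∈ φ.freeN, y ∉ (τ i).vars := fun i hi hyi => by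
        have := (Finset.le_sup (f := id) hyi).trans
          (Finset.le_sup (f := fun i => (τ i).vars.sup id) hi)
        simp only [id] at this
        omega
      obtain ⟨φ', h', e⟩ := exists_sat_substVars S 𝔛 φ h (Function.update τ x (.var y))
      refine ⟨all y φ', h', fun v w => forall_congr' fun a => (e _ w).trans
        (sat_congr S 𝔛 φ w fun i hi => ?_)⟩
      by_cases hix : i = x
      · subst hix; simp [PTerm.val]
      · simp only [Function.update_of_ne hix]
        exact PTerm.val_update_of_notMem S (hy i hi) v a
  | allS _ _, h, _ => h.elim

end Fml

/-! ### Arithmetical definability -/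

def IsArithmetical {M : Type} (S : AStr M) (𝔛 : Set (Set M)) (P : (ℕ → M) → Prop) : Prop :=
  ∃ (φ : Fml) (w : ℕ → Set M), φ.IsArith ∧ (∀ k, w k ∈ 𝔛) ∧ ∀ v, P v ↔ Sat S 𝔛 v w φ

namespace IsArithmetical

variable {M : Type} {S : AStr M} {𝔛 : Set (Set M)} {P Q : (ℕ → M) → Prop}

theorem of_iff (hP : IsArithmetical S 𝔛 P) (h : ∀ v, P v ↔ Q v) : IsArithmetical S 𝔛 Q :=
  let ⟨φ, w, hφ, hw, e⟩ := hP
  ⟨φ, w, hφ, hw, fun v => (h v).symm.trans (e v)⟩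

theorem eq (h𝔛 : 𝔛.Nonempty) (t u : PTerm) :
    IsArithmetical S 𝔛 fun v => t.val S v = u.val S v :=
  ⟨.eq t u, fun _ => h𝔛.some, trivial, fun _ => h𝔛.some_mem, fun _ => Iff.rfl⟩

theorem lt (h𝔛 : 𝔛.Nonempty) (t u : PTerm) :
    IsArithmetical S 𝔛 fun v => S.lt (t.val S v) (u.val S v) :=
  ⟨.lt t u, fun _ => h𝔛.some, trivial, fun _ => h𝔛.some_mem, fun _ => Iff.rfl⟩

theorem mem (t : PTerm) {X : Set M} (hX : X ∈ 𝔛) :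
    IsArithmetical S 𝔛 fun v => t.val S v ∈ X :=
  ⟨.mem t 0, fun _ => X, trivial, fun _ => hX, fun _ => Iff.rfl⟩

theorem not (hP : IsArithmetical S 𝔛 P) : IsArithmetical S 𝔛 fun v => ¬ P v :=
  let ⟨φ, w, hφ, hw, e⟩ := hP
  ⟨.not φ, w, hφ, hw, fun v => not_congr (e v)⟩

/-- The set parameters of the two formulas are interleaved on even and odd indices. -/
theorem imp (hP : IsArithmetical S 𝔛 P) (hQ : IsArithmetical S 𝔛 Q) :
    IsArithmetical S 𝔛 fun v => P v → Q v := by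
  obtain ⟨φ, w₁, hφ, hw₁, e₁⟩ := hP
  obtain ⟨ψ, w₂, hψ, hw₂, e₂⟩ := hQ
  set w : ℕ → Set M := fun k => if k % 2 = 0 then w₁ (k / 2) else w₂ (k / 2)
  have h₁ : w ∘ (2 * ·) = w₁ := funext fun k => by simp [w]
  have h₂ : w ∘ (2 * · + 1) = w₂ := funext fun k => by
    simp only [w, Function.comp_apply]
    rw [if_neg (by omega), show (2 * k + 1) / 2 = k by omega]
  refine ⟨.imp (φ.renameSets (2 * ·)) (ψ.renameSets (2 * · + 1)), w,
    ⟨hφ.renameSets _, hψ.renameSets _⟩, fun k => ?_, fun v => ?_⟩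
  · by_cases hk : k % 2 = 0 <;> simp [w, hk, hw₁, hw₂]
  · simp only [Sat, Fml.sat_renameSets S 𝔛 _ hφ, Fml.sat_renameSets S 𝔛 _ hψ, h₁, h₂]
    exact imp_congr (e₁ v) (e₂ v)

theorem and (hP : IsArithmetical S 𝔛 P) (hQ : IsArithmetical S 𝔛 Q) :
    IsArithmetical S 𝔛 fun v => P v ∧ Q v :=
  (hP.imp hQ.not).not.of_iff fun _ => by tauto

theorem or (hP : IsArithmetical S 𝔛 P) (hQ : IsArithmetical S 𝔛 Q) :
    IsArithmetical S 𝔛 fun v => P v ∨ Q v :=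
  (hP.not.imp hQ).of_iff fun _ => by tauto

theorem forall_update (x : ℕ) (hP : IsArithmetical S 𝔛 P) :
    IsArithmetical S 𝔛 fun v => ∀ b, P (Function.update v x b) :=
  let ⟨φ, w, hφ, hw, e⟩ := hP
  ⟨.all x φ, w, hφ, hw, fun _ => forall_congr' fun _ => e _⟩

theorem exists_update (x : ℕ) (hP : IsArithmetical S 𝔛 P) :
    IsArithmetical S 𝔛 fun v => ∃ b, P (Function.update v x b) :=
  (hP.not.forall_update x).not.of_iff fun _ => not_forall_not

theorem substVars (τ : ℕ → PTerm) (hP : IsArithmetical S 𝔛 P) :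
    IsArithmetical S 𝔛 fun v => P fun i => (τ i).val S v := by
  obtain ⟨φ, w, hφ, hw, e⟩ := hP
  obtain ⟨φ', hφ', e'⟩ := Fml.exists_sat_substVars S 𝔛 φ hφ τ
  exact ⟨φ', w, hφ', hw, fun v => (e _).trans (e' v w).symm⟩

theorem forall_lt (h𝔛 : 𝔛.Nonempty) {P : ℕ → (ℕ → M) → Prop} :
    ∀ l, (∀ i < l, IsArithmetical S 𝔛 (P i)) → IsArithmetical S 𝔛 fun v => ∀ i < l, P i v
  | 0, _ => (eq h𝔛 .zero .zero).of_iff fun _ => by simp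
  | l + 1, h => ((forall_lt h𝔛 l fun i hi => h i (by omega)).and (h l (by omega))).of_iff
      fun _ => Nat.forall_lt_succ_right.symm

theorem setOf_update_mem (hACA : SatACA0 S 𝔛) (hP : IsArithmetical S 𝔛 P) (v : ℕ → M)
    (x : ℕ) : {a | P (Function.update v x a)} ∈ 𝔛 := by
  obtain ⟨φ, w, hφ, hw, e⟩ := hP
  simpa only [e] using hACA.2.2 φ x hφ v w hw

theorem setOf_mem (hACA : SatACA0 S 𝔛) (hP : IsArithmetical S 𝔛 P) :
    {a | P fun _ => a} ∈ 𝔛 := by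
  simpa [PTerm.val] using (hP.substVars fun _ => .var 0).setOf_update_mem hACA (fun _ => S.zero) 0

theorem le (h𝔛 : 𝔛.Nonempty) (t u : PTerm) :
    IsArithmetical S 𝔛 fun v => S.le (t.val S v) (u.val S v) :=
  (lt h𝔛 t u).or (eq h𝔛 t u)

theorem pairRel (h𝔛 : 𝔛.Nonempty) (t u r : PTerm) :
    IsArithmetical S 𝔛 fun v => S.PairRel (t.val S v) (u.val S v) (r.val S v) :=
  eq h𝔛 (.mul (.add .one .one) t) (.add (.mul (.add u r) (.add (.add u r) .one))
    (.mul (.add .one .one) u))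

theorem nonempty (hP : IsArithmetical S 𝔛 P) : 𝔛.Nonempty :=
  let ⟨_, w, _, hw, _⟩ := hP
  ⟨w 0, hw 0⟩

theorem seqLen (h𝔛 : 𝔛.Nonempty) (t u : PTerm) :
    IsArithmetical S 𝔛 fun v => S.SeqLen (t.val S v) (u.val S v) := by
  have base : IsArithmetical S 𝔛 fun v => S.SeqLen (v 0) (v 1) :=
    ((pairRel h𝔛 (.var 0) (.var 2) (.var 1)).exists_update 2).of_iff fun v => by
      simp [PTerm.val, AStr.SeqLen]
  exact (base.substVars fun i => [t, u].getD i .zero).of_iff fun v => by simp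

theorem seqAt (h𝔛 : 𝔛.Nonempty) (t u r : PTerm) :
    IsArithmetical S 𝔛 fun v => S.SeqAt (t.val S v) (u.val S v) (r.val S v) := by
  -- slots: `s, i, x` and then the witnesses `c, l, a, b, q` of `SeqAt`, `BetaRel`, `ModRel`
  let m : PTerm := .add .one (.mul (.add (.var 1) .one) (.var 6))
  have hmod := (lt (S := S) h𝔛 (.var 2) m).and
    ((eq h𝔛 (.var 5) (.add (.mul (.var 7) m) (.var 2))).exists_update 7)
  have hbeta := (((pairRel h𝔛 (.var 3) (.var 5) (.var 6)).and hmod).exists_update 6).exists_update 5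
  have base : IsArithmetical S 𝔛 fun v => S.SeqAt (v 0) (v 1) (v 2) :=
    ((((pairRel h𝔛 (.var 0) (.var 3) (.var 4)).and
      ((lt h𝔛 (.var 1) (.var 4)).and hbeta)).exists_update 4).exists_update 3).of_iff fun v => by
    simp [AStr.SeqAt, AStr.BetaRel, AStr.ModRel, PTerm.val, m]
  exact (base.substVars fun i => [t, u, r].getD i .zero).of_iff fun v => by simp

end IsArithmetical

namespace AStr.CodedFun

variable {M : Type} {S : AStr M} {𝔛 : Set (Set M)}

theorem isArithmetical {g : M → M} (hg : S.CodedFun 𝔛 g) :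
    IsArithmetical S 𝔛 fun v => g (v 0) = v 1 := by
  obtain ⟨G, hG, hgG⟩ := hg
  exact (((IsArithmetical.pairRel ⟨G, hG⟩ (.var 2) (.var 0) (.var 1)).and
    (IsArithmetical.mem (.var 2) hG)).exists_update 2).of_iff fun v => by
      simp [PTerm.val, hgG, AStr.SliceAt]

end AStr.CodedFun

/-! ### Models of PA⁻ as ordered semirings -/

section DiscreteSemiring

variable {R : Type*} [CommSemiring R] [LinearOrder R] [IsStrictOrderedRing R]

/-- Cantor pairing `p = (a + b)(a + b + 1)/2 + a`, stated without division. -/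
theorem cantor_pair_injective [CanonicallyOrderedAdd R] (hdisc : ∀ a b : R, a < b → a + 1 ≤ b)
    {p a b a' b' : R} (h : 2 * p = (a + b) * (a + b + 1) + 2 * a)
    (h' : 2 * p = (a' + b') * (a' + b' + 1) + 2 * a') : a = a' ∧ b = b' := by
  have key : ∀ {s s' a a' : R}, a ≤ s → s < s' → s * (s + 1) + 2 * a < s' * (s' + 1) + 2 * a' := by
    intro s s' a a' ha hs
    calc s * (s + 1) + 2 * a
        ≤ s * (s + 1) + 2 * s := by gcongr
      _ < (s + 1) * (s + 1 + 1) := by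
        rw [show (s + 1) * (s + 1 + 1) = s * (s + 1) + 2 * s + 2 by ring]
        exact lt_add_of_pos_right _ two_pos
      _ ≤ s' * (s' + 1) := by gcongr <;> exact hdisc _ _ hs
      _ ≤ s' * (s' + 1) + 2 * a' := le_self_add
  have hs : a + b = a' + b' := by
    rcases lt_trichotomy (a + b) (a' + b') with hs | hs | hs
    · exact absurd (h.symm.trans h') (key le_self_add hs).ne
    · exact hs
    · exact absurd (h'.symm.trans h) (key le_self_add hs).ne
  rw [hs, h'] at h
  have ha : a = a' := (strictMono_mul_left_of_pos two_pos).injective (add_left_cancel h).symm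
  exact ⟨ha, add_left_cancel (ha ▸ hs)⟩

theorem add_self_ne_add_self_add_one (hdisc : ∀ a b : R, a < b → a + 1 ≤ b) (c d : R) :
    c + c ≠ d + d + 1 := by
  rcases le_or_gt c d with hcd | hdc
  · exact ne_of_lt (lt_add_of_le_of_pos (add_le_add hcd hcd) one_pos)
  · refine ne_of_gt ?_
    calc d + d + 1 < (d + 1) + (d + 1) := by
          rw [show (d + 1) + (d + 1) = d + d + 1 + 1 by ring]; exact lt_add_one _
      _ ≤ c + c := add_le_add (hdisc _ _ hdc) (hdisc _ _ hdc)

end DiscreteSemiring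

namespace PAminusSem

variable {M : Type} {S : AStr M}

abbrev commSemiring (h : PAminusSem S) : CommSemiring M := by
  let _ : Zero M := ⟨S.zero⟩
  let _ : One M := ⟨S.one⟩
  let _ : Add M := ⟨S.add⟩
  let _ : Mul M := ⟨S.mul⟩
  have add_assoc : ∀ a b c : M, S.add a (S.add b c) = S.add (S.add a b) c := h.1
  have add_comm : ∀ a b : M, S.add a b = S.add b a := h.2.1
  have mul_assoc : ∀ a b c : M, S.mul a (S.mul b c) = S.mul (S.mul a b) c := h.2.2.1
  have mul_comm : ∀ a b : M, S.mul a b = S.mul b a := h.2.2.2.1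
  have mul_add : ∀ a b c : M, S.mul a (S.add b c) = S.add (S.mul a b) (S.mul a c) := h.2.2.2.2.1
  have add_zero : ∀ a : M, S.add a S.zero = a := h.2.2.2.2.2.1
  have mul_zero : ∀ a : M, S.mul a S.zero = S.zero := h.2.2.2.2.2.2.1
  have mul_one : ∀ a : M, S.mul a S.one = a := h.2.2.2.2.2.2.2.1
  exact
    { add_assoc := fun a b c => (add_assoc a b c).symm
      add_comm := add_comm
      zero_add := fun a => (add_comm _ _).trans (add_zero a)
      add_zero := add_zero
      mul_assoc := fun a b c => (mul_assoc a b c).symm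
      mul_comm := mul_comm
      one_mul := fun a => (mul_comm _ _).trans (mul_one a)
      mul_one := mul_one
      left_distrib := mul_add
      right_distrib := fun a b c => by
        change S.mul (S.add a b) c = _
        rw [mul_comm, mul_add, mul_comm c a, mul_comm c b]; rfl
      zero_mul := fun a => (mul_comm _ _).trans (mul_zero a)
      mul_zero := mul_zero
      nsmul := nsmulRec
      npow := npowRec }

noncomputable abbrev linearOrder (h : PAminusSem S) : LinearOrder M := by
  have lt_trans : ∀ a b c : M, S.lt a b → S.lt b c → S.lt a c := h.2.2.2.2.2.2.2.2.1
  have lt_irrefl : ∀ a : M, ¬ S.lt a a := h.2.2.2.2.2.2.2.2.2.1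
  have lt_trichotomy : ∀ a b : M, S.lt a b ∨ a = b ∨ S.lt b a := h.2.2.2.2.2.2.2.2.2.2.1
  exact
    { le := S.le
      lt := S.lt
      le_refl := fun _ => .inr rfl
      le_trans := fun a b c hab hbc => by
        rcases hab with hab | rfl
        · rcases hbc with hbc | rfl
          exacts [.inl (lt_trans _ _ _ hab hbc), .inl hab]
        · exact hbc
      le_antisymm := fun a b hab hba => by
        rcases hab with hab | rfl
        · rcases hba with hba | rfl
          exacts [(lt_irrefl a (lt_trans _ _ _ hab hba)).elim, rfl]
        · rfl
      le_total := fun a b => by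
        rcases lt_trichotomy a b with hab | rfl | hba
        exacts [.inl (.inl hab), .inl (.inr rfl), .inr (.inl hba)]
      lt_iff_le_not_ge := fun a b => by
        constructor
        · intro hab
          refine ⟨.inl hab, ?_⟩
          rintro (hba | rfl)
          exacts [lt_irrefl _ (lt_trans _ _ _ hab hba), lt_irrefl _ hab]
        · rintro ⟨hab | rfl, hba⟩
          exacts [hab, (hba (.inr rfl)).elim]
      toDecidableLE := Classical.decRel _ }

theorem isStrictOrderedRing (h : PAminusSem S) :
    letI := h.commSemiring; letI := h.linearOrder; IsStrictOrderedRing M := by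
  let _ := h.commSemiring
  let _ := h.linearOrder
  have add_lt : ∀ a b c : M, a < b → a + c < b + c := h.2.2.2.2.2.2.2.2.2.2.2.1
  have mul_lt : ∀ a b c : M, 0 < c → a < b → a * c < b * c := h.2.2.2.2.2.2.2.2.2.2.2.2.1
  have zero_lt_one : (0 : M) < 1 := h.2.2.2.2.2.2.2.2.2.2.2.2.2.2.1
  exact
    { add_le_add_left := fun a b hab c =>
        hab.lt_or_eq.elim (fun hab => (add_lt a b c hab).le) fun e => e ▸ le_rfl
      le_of_add_le_add_left := fun a b c habc => not_lt.mp fun hcb => by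
        have := add_lt c b a hcb
        rw [add_comm c, add_comm b] at this
        exact this.not_ge habc
      zero_le_one := zero_lt_one.le
      exists_pair_ne := ⟨0, 1, zero_lt_one.ne⟩
      mul_lt_mul_of_pos_left := fun a ha b c hbc => by
        rw [mul_comm a, mul_comm a]; exact mul_lt b c a ha hbc
      mul_lt_mul_of_pos_right := fun a ha b c hbc => mul_lt b c a ha hbc }

theorem canonicallyOrderedAdd (h : PAminusSem S) :
    letI := h.commSemiring; letI := h.linearOrder; CanonicallyOrderedAdd M := by
  let _ := h.commSemiring
  let _ := h.linearOrder
  have _ := h.isStrictOrderedRing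
  have exists_add : ∀ a b : M, a < b → ∃ c, a + c = b := h.2.2.2.2.2.2.2.2.2.2.2.2.2.1
  have zero_or_pos : ∀ a : M, a = 0 ∨ 0 < a := h.2.2.2.2.2.2.2.2.2.2.2.2.2.2.2.2
  have zero_le (a : M) : 0 ≤ a := (zero_or_pos a).elim (fun e => e ▸ le_rfl) le_of_lt
  exact
    { exists_add_of_le := fun {a b} hab => hab.lt_or_eq.elim
        (fun hab => (exists_add a b hab).imp fun _ e => e.symm) fun e => ⟨0, by rw [e, add_zero]⟩
      le_add_self := fun a b => le_add_of_nonneg_left (zero_le b)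
      le_self_add := fun a b => le_add_of_nonneg_right (zero_le b) }

theorem add_one_le_of_lt (h : PAminusSem S) :
    letI := h.commSemiring; letI := h.linearOrder; ∀ a b : M, a < b → a + 1 ≤ b := by
  let _ := h.commSemiring
  let _ := h.linearOrder
  have _ := h.isStrictOrderedRing
  have exists_add : ∀ a b : M, a < b → ∃ c, a + c = b := h.2.2.2.2.2.2.2.2.2.2.2.2.2.1
  have eq_one_or_one_lt : ∀ a : M, 0 < a → a = 1 ∨ 1 < a := h.2.2.2.2.2.2.2.2.2.2.2.2.2.2.2.1
  have zero_or_pos : ∀ a : M, a = 0 ∨ 0 < a := h.2.2.2.2.2.2.2.2.2.2.2.2.2.2.2.2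
  intro a b hab
  obtain ⟨c, rfl⟩ := exists_add a b hab
  rcases zero_or_pos c with rfl | hc
  · exact absurd hab (by simp)
  · rcases eq_one_or_one_lt c hc with rfl | hc
    exacts [le_rfl, add_le_add_right hc.le a]

theorem pairRel_injective (h : PAminusSem S) {p a b a' b' : M} (hab : S.PairRel p a b)
    (hab' : S.PairRel p a' b') : a = a' ∧ b = b' := by
  let _ := h.commSemiring
  let _ := h.linearOrder
  have _ := h.isStrictOrderedRing
  have _ := h.canonicallyOrderedAdd
  change (1 + 1) * p = (a + b) * (a + b + 1) + (1 + 1) * a at hab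
  change (1 + 1) * p = (a' + b') * (a' + b' + 1) + (1 + 1) * a' at hab'
  rw [one_add_one_eq_two] at hab hab'
  exact cantor_pair_injective h.add_one_le_of_lt hab hab'

end PAminusSem

/-! ### Consequences of ACA₀ -/

namespace SatACA0

variable {M : Type} {S : AStr M} {𝔛 : Set (Set M)}

theorem induction (hACA : SatACA0 S 𝔛) {P : (ℕ → M) → Prop} (hP : IsArithmetical S 𝔛 P)
    (h0 : P fun _ => S.zero) (hsucc : ∀ a, (P fun _ => a) → P fun _ => S.add a S.one) (a : M) :
    P fun _ => a :=
  hACA.2.1 _ (hP.setOf_mem hACA) h0 hsucc a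

theorem exists_pairRel (hACA : SatACA0 S 𝔛) (h𝔛 : 𝔛.Nonempty) (a b : M) :
    ∃ p, S.PairRel p a b := by
  let _ := hACA.1.commSemiring
  have hQ : IsArithmetical S 𝔛 fun v => ∃ c : M, v 0 * (v 0 + 1) = c + c :=
    ((IsArithmetical.eq h𝔛 (.mul (.var 0) (.add (.var 0) .one))
      (.add (.var 1) (.var 1))).exists_update 1).of_iff fun v => by simp [PTerm.val]; rfl
  obtain ⟨c, hc⟩ := hACA.induction hQ ⟨0, by change 0 * (0 + 1) = 0 + 0; simp⟩
    (fun x ⟨c, hc⟩ => ⟨c + (x + 1), by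
      change (x + 1) * (x + 1 + 1) = _
      rw [show (x + 1) * (x + 1 + 1) = x * (x + 1) + (x + 1) + (x + 1) by ring, hc]
      ring⟩) (a + b)
  exact ⟨c + a, by
    change (1 + 1) * (c + a) = (a + b) * (a + b + 1) + (1 + 1) * a
    rw [hc]; ring⟩

theorem exists_least (hACA : SatACA0 S 𝔛) {X : Set M} (hX : X ∈ 𝔛) {a : M} (ha : a ∈ X) :
    ∃ m ∈ X, ∀ x ∈ X, S.le m x := by
  let _ := hACA.1.commSemiring
  let _ := hACA.1.linearOrder
  have _ := hACA.1.isStrictOrderedRing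
  have _ := hACA.1.canonicallyOrderedAdd
  have le_of_lt_add_one : ∀ c x : M, c < x + 1 → c ≤ x := fun c x hc =>
    not_lt.mp fun hxc => (hACA.1.add_one_le_of_lt _ _ hxc).not_gt hc
  by_contra! hno
  have hQ : IsArithmetical S 𝔛 fun v => ∀ c, S.le c (v 0) → c ∉ X :=
    (((IsArithmetical.le ⟨X, hX⟩ (.var 1) (.var 0)).imp
      (IsArithmetical.mem (.var 1) hX).not).forall_update 1).of_iff fun v => by simp [PTerm.val]
  refine hACA.induction hQ ?_ ?_ a a (le_refl a) ha
  · intro c hc hcX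
    obtain ⟨x, -, hx⟩ := hno c hcX
    exact hx ((nonpos_iff_eq_zero.mp (show c ≤ 0 from hc)) ▸ (zero_le : 0 ≤ x))
  · intro x hx c hc hcX
    rcases (show c ≤ x + 1 from hc).lt_or_eq with hc | rfl
    · exact hx c (le_of_lt_add_one c x hc) hcX
    · obtain ⟨y, hy, hxy⟩ := hno _ hcX
      exact hx y (le_of_lt_add_one y x (not_le.mp hxy)) hy

theorem inter_mem (hACA : SatACA0 S 𝔛) {A B : Set M} (hA : A ∈ 𝔛) (hB : B ∈ 𝔛) :
    A ∩ B ∈ 𝔛 :=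
  ((IsArithmetical.mem (.var 0) hA).and (IsArithmetical.mem (.var 0) hB)).setOf_mem hACA

theorem univ_mem (hACA : SatACA0 S 𝔛) (h𝔛 : 𝔛.Nonempty) : Set.univ ∈ 𝔛 := by
  simpa using (IsArithmetical.eq h𝔛 .zero .zero).setOf_mem hACA

theorem compl_mem (hACA : SatACA0 S 𝔛) {A : Set M} (hA : A ∈ 𝔛) : Aᶜ ∈ 𝔛 :=
  (IsArithmetical.mem (.var 0) hA).not.setOf_mem hACA

theorem setOf_lt_mem (hACA : SatACA0 S 𝔛) (h𝔛 : 𝔛.Nonempty) (b : M) :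
    {x | S.lt b x} ∈ 𝔛 := by
  simpa [PTerm.val] using
    (IsArithmetical.lt h𝔛 (.var 1) (.var 0)).setOf_update_mem hACA (fun _ => b) 0

/-- The even and the odd elements. -/
theorem exists_disjoint_unb (hACA : SatACA0 S 𝔛) (h𝔛 : 𝔛.Nonempty) :
    ∃ E ∈ S.PX 𝔛, ∃ O ∈ S.PX 𝔛, Disjoint E O := by
  let _ := hACA.1.commSemiring
  let _ := hACA.1.linearOrder
  have _ := hACA.1.isStrictOrderedRing
  have _ := hACA.1.canonicallyOrderedAdd
  have hE : IsArithmetical S 𝔛 fun v => ∃ c : M, v 0 = c + c :=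
    ((IsArithmetical.eq h𝔛 (.var 0) (.add (.var 1) (.var 1))).exists_update 1).of_iff fun v => by
      simp [PTerm.val]; rfl
  have hO : IsArithmetical S 𝔛 fun v => ∃ c : M, v 0 = c + c + 1 :=
    ((IsArithmetical.eq h𝔛 (.var 0) (.add (.add (.var 1) (.var 1)) .one)).exists_update 1).of_iff
      fun v => by simp [PTerm.val]; rfl
  refine ⟨_, ⟨hE.setOf_mem hACA, fun b => ⟨(b + 1) + (b + 1), ⟨b + 1, rfl⟩, ?_⟩⟩,
    _, ⟨hO.setOf_mem hACA, fun b => ⟨b + b + 1, ⟨b, rfl⟩, ?_⟩⟩, ?_⟩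
  · exact (lt_add_one b).trans_le le_self_add
  · exact (le_self_add : b ≤ b + b).trans_lt (lt_add_one _)
  · rw [Set.disjoint_left]
    rintro x ⟨c, rfl⟩ ⟨d, hd⟩
    exact add_self_ne_add_self_add_one hACA.1.add_one_le_of_lt c d hd

theorem codedFun_of_isArithmetical (hACA : SatACA0 S 𝔛) {g : M → M}
    (hg : IsArithmetical S 𝔛 fun v => g (v 0) = v 1) : S.CodedFun 𝔛 g := by
  have h𝔛 := hg.nonempty
  have hG : IsArithmetical S 𝔛 fun v => ∃ a b, S.PairRel (v 0) a b ∧ g a = b :=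
    ((((IsArithmetical.pairRel h𝔛 (.var 0) (.var 1) (.var 2)).and
      (hg.substVars fun i => .var (i + 1))).exists_update 2).exists_update 1).of_iff fun v => by
        simp [PTerm.val]
  refine ⟨_, hG.setOf_mem hACA, fun a b => ⟨?_, ?_⟩⟩
  · rintro rfl
    obtain ⟨p, hp⟩ := hACA.exists_pairRel h𝔛 a (g a)
    exact ⟨p, hp, a, g a, hp, rfl⟩
  · rintro ⟨p, hp, a', b', hp', rfl⟩
    obtain ⟨rfl, rfl⟩ := hACA.1.pairRel_injective hp' hp
    rfl

theorem codedFun_const (hACA : SatACA0 S 𝔛) (h𝔛 : 𝔛.Nonempty) (c : M) :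
    S.CodedFun 𝔛 fun _ => c := by
  have hc : {a | a = c} ∈ 𝔛 := by
    simpa [PTerm.val] using
      (IsArithmetical.eq h𝔛 (.var 0) (.var 1)).setOf_update_mem hACA (fun _ => c) 0
  exact hACA.codedFun_of_isArithmetical
    ((IsArithmetical.mem (.var 1) hc).of_iff fun v => by simp [PTerm.val, eq_comm])

/-- `g a` is the least `b` with `R a b`, if there is one. -/
theorem exists_codedFun_of_isArithmetical (hACA : SatACA0 S 𝔛) {R : M → M → Prop}
    (hR : IsArithmetical S 𝔛 fun v => R (v 0) (v 1)) :
    ∃ g : M → M, S.CodedFun 𝔛 g ∧ ∀ a b, R a b → R a (g a) := by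
  classical
  let _ := hACA.1.linearOrder
  have h𝔛 := hR.nonempty
  have hleast : ∀ a, (∃ b, R a b) → ∃ m, R a m ∧ ∀ b, R a b → S.le m b := fun a ⟨b, hb⟩ => by
    have hX : {b | R a b} ∈ 𝔛 := by
      simpa using hR.setOf_update_mem hACA (fun _ => a) 1
    simpa using hACA.exists_least hX hb
  let g a := if h : ∃ b, R a b then (hleast a h).choose else S.zero
  have hg : ∀ a b, g a = b ↔
      (R a b ∧ ∀ b', R a b' → S.le b b') ∨ ((∀ b', ¬ R a b') ∧ b = S.zero) := by
    intro a b
    by_cases h : ∃ b, R a b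
    · obtain ⟨hm, hmin⟩ := (hleast a h).choose_spec
      have hno : ¬ ∀ b', ¬ R a b' := fun hall => h.elim hall
      simp only [g, dif_pos h, hno, false_and, or_false]
      exact ⟨fun e => e ▸ ⟨hm, hmin⟩, fun ⟨hb, hbmin⟩ => le_antisymm (hmin b hb) (hbmin _ hm)⟩
    · simp only [not_exists] at h
      simp [g, h, eq_comm]
  have hR' := hR.substVars fun i => if i = 0 then .var 0 else .var 2
  refine ⟨g, hACA.codedFun_of_isArithmetical ((((hR.and ((hR'.imp
    (IsArithmetical.le h𝔛 (.var 1) (.var 2))).forall_update 2)).or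
      ((hR'.not.forall_update 2).and (IsArithmetical.eq h𝔛 (.var 1) .zero)))).of_iff fun v => ?_),
    fun a b hb => ?_⟩
  · simp [PTerm.val, hg]
  · have := (hg a (g a)).mp rfl
    tauto

end SatACA0

/-! ### Ultrafilters on P_𝔛 -/

/-- The sets containing some `B ∩ A` with `B ∈ U` form a filter extending `U`; it is proper
because `P` is not directed, so by maximality it is `U`. -/
theorem IsUltraOn.mem_of_inter_mem {α : Type} {P U : Set (Set α)} (hU : IsUltraOn P U)
    (hP : ∃ E ∈ P, ∃ O ∈ P, ∀ C ∈ P, ¬ (C ⊆ E ∧ C ⊆ O)) {A : Set α} (hA : A ∈ P)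
    (hAU : ∀ B ∈ U, B ∩ A ∈ P) : A ∈ U := by
  obtain ⟨⟨hUP, ⟨B₀, hB₀⟩, -, -, hdir⟩, hmax⟩ := hU
  set G := {D | D ∈ P ∧ ∃ B ∈ U, B ∩ A ⊆ D}
  have hGdir : ∀ D₁ ∈ G, ∀ D₂ ∈ G, ∃ C ∈ G, C ⊆ D₁ ∧ C ⊆ D₂ := by
    rintro D₁ ⟨-, B₁, hB₁, hD₁⟩ D₂ ⟨-, B₂, hB₂, hD₂⟩
    obtain ⟨C, hC, hCB₁, hCB₂⟩ := hdir B₁ hB₁ B₂ hB₂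
    exact ⟨C ∩ A, ⟨hAU C hC, C, hC, subset_rfl⟩,
      (Set.inter_subset_inter_left A hCB₁).trans hD₁,
      (Set.inter_subset_inter_left A hCB₂).trans hD₂⟩
  have hGP : G ≠ P := fun hGP => by
    obtain ⟨E, hE, O, hO, hEO⟩ := hP
    obtain ⟨C, hC, hCE, hCO⟩ := hGdir E (hGP ▸ hE) O (hGP ▸ hO)
    exact hEO C hC.1 ⟨hCE, hCO⟩
  have hG : IsFilterOn P G := ⟨fun _ hD => hD.1, ⟨A, hA, B₀, hB₀, Set.inter_subset_right⟩, hGP,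
    fun _ ⟨_, B, hB, hD⟩ _ hD' hDD' => ⟨hD', B, hB, hD.trans hDD'⟩, hGdir⟩
  rw [← hmax G hG fun B hB => ⟨hUP hB, B, hB, Set.inter_subset_left⟩]
  exact ⟨hA, B₀, hB₀, Set.inter_subset_right⟩

namespace IsUltraOn

variable {M : Type} {S : AStr M} {𝔛 U : Set (Set M)}

theorem mem_𝔛 (hU : IsUltraOn (S.PX 𝔛) U) {A : Set M} (hA : A ∈ U) : A ∈ 𝔛 := (hU.1.1 hA).1

theorem unb (hU : IsUltraOn (S.PX 𝔛) U) {A : Set M} (hA : A ∈ U) : S.Unb A := (hU.1.1 hA).2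

theorem mem_of_subset (hU : IsUltraOn (S.PX 𝔛) U) {A B : Set M} (hA : A ∈ U) (hB : B ∈ 𝔛)
    (hAB : A ⊆ B) : B ∈ U :=
  hU.1.2.2.2.1 A hA B ⟨hB, fun b => (hU.unb hA b).imp fun _ ⟨ha, hb⟩ => ⟨hAB ha, hb⟩⟩ hAB

theorem inter_mem (hU : IsUltraOn (S.PX 𝔛) U) (hACA : SatACA0 S 𝔛) {A B : Set M}
    (hA : A ∈ U) (hB : B ∈ U) : A ∩ B ∈ U :=
  let ⟨_, hC, hCA, hCB⟩ := hU.1.2.2.2.2 A hA B hB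
  hU.mem_of_subset hC (hACA.inter_mem (hU.mem_𝔛 hA) (hU.mem_𝔛 hB)) (Set.subset_inter hCA hCB)

theorem empty_not_mem (hU : IsUltraOn (S.PX 𝔛) U) : ∅ ∉ U := fun h =>
  let ⟨_, ha, _⟩ := hU.unb h S.zero
  ha

theorem unb_inter_setOf_lt (hU : IsUltraOn (S.PX 𝔛) U) (hACA : SatACA0 S 𝔛) {A : Set M}
    (hA : A ∈ U) (b : M) : S.Unb (A ∩ {x | S.lt b x}) := fun c => by
  let _ := hACA.1.linearOrder
  obtain ⟨a, ha, hca⟩ := hU.unb hA (max b c)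
  exact ⟨a, ⟨ha, (le_max_left b c).trans_lt hca⟩, (le_max_right b c).trans_lt hca⟩

theorem mem_or_compl_mem (hU : IsUltraOn (S.PX 𝔛) U) (hACA : SatACA0 S 𝔛) {A : Set M}
    (hA : A ∈ 𝔛) : A ∈ U ∨ Aᶜ ∈ U := by
  have h𝔛 : 𝔛.Nonempty := ⟨A, hA⟩
  have hP : ∃ E ∈ S.PX 𝔛, ∃ O ∈ S.PX 𝔛, ∀ C ∈ S.PX 𝔛, ¬ (C ⊆ E ∧ C ⊆ O) := by
    obtain ⟨E, hE, O, hO, hEO⟩ := hACA.exists_disjoint_unb h𝔛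
    refine ⟨E, hE, O, hO, fun C hC ⟨hCE, hCO⟩ => ?_⟩
    obtain ⟨x, hx, -⟩ := hC.2 S.zero
    exact Set.disjoint_left.mp hEO (hCE hx) (hCO hx)
  obtain ⟨B₀, hB₀⟩ := hU.1.2.1
  by_cases hcase : ∀ B ∈ U, S.Unb (B ∩ A)
  · refine .inl (hU.mem_of_inter_mem hP ⟨hA, fun b => ?_⟩ fun B hB =>
      ⟨hACA.inter_mem (hU.mem_𝔛 hB) hA, hcase B hB⟩)
    obtain ⟨a, ha, hba⟩ := hcase B₀ hB₀ b
    exact ⟨a, ha.2, hba⟩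
  · obtain ⟨B, hB, hBA⟩ := not_forall₂.mp hcase
    simp only [AStr.Unb, not_forall, not_exists, not_and] at hBA
    obtain ⟨b, hb⟩ := hBA
    have hT𝔛 : B ∩ {x | S.lt b x} ∈ 𝔛 := hACA.inter_mem (hU.mem_𝔛 hB) (hACA.setOf_lt_mem h𝔛 b)
    have hT : B ∩ {x | S.lt b x} ∈ U := hU.mem_of_inter_mem hP
      ⟨hT𝔛, hU.unb_inter_setOf_lt hACA hB b⟩ fun B' hB' => by
        refine ⟨hACA.inter_mem (hU.mem_𝔛 hB') hT𝔛, ?_⟩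
        rw [← Set.inter_assoc]
        exact hU.unb_inter_setOf_lt hACA (hU.inter_mem hACA hB' hB) b
    exact .inr (hU.mem_of_subset hT (hACA.compl_mem hA) fun x ⟨hxB, hbx⟩ hxA => hb x ⟨hxB, hxA⟩ hbx)

theorem compl_mem_iff (hU : IsUltraOn (S.PX 𝔛) U) (hACA : SatACA0 S 𝔛) {A : Set M}
    (hA : A ∈ 𝔛) : Aᶜ ∈ U ↔ A ∉ U :=
  ⟨fun hAc hA' => hU.empty_not_mem (Set.inter_compl_self A ▸ hU.inter_mem hACA hA' hAc),
    (hU.mem_or_compl_mem hACA hA).resolve_left⟩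

theorem setOf_const_mem_iff (hU : IsUltraOn (S.PX 𝔛) U) (hACA : SatACA0 S 𝔛) (p : Prop) :
    {_a : M | p} ∈ U ↔ p := by
  obtain ⟨B, hB⟩ := hU.1.2.1
  by_cases hp : p
  · simpa [hp] using hU.mem_of_subset hB (hACA.univ_mem ⟨B, hU.mem_𝔛 hB⟩) (Set.subset_univ B)
  · simpa [hp] using hU.empty_not_mem

theorem imp_mem_iff (hU : IsUltraOn (S.PX 𝔛) U) (hACA : SatACA0 S 𝔛) {A B : Set M}
    (hA : A ∈ 𝔛) (hB : B ∈ 𝔛) : (A ∈ U → B ∈ U) ↔ {a | a ∈ A → a ∈ B} ∈ U := by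
  have hAB : {a | a ∈ A → a ∈ B} ∈ 𝔛 :=
    ((IsArithmetical.mem (.var 0) hA).imp (IsArithmetical.mem (.var 0) hB)).setOf_mem hACA
  refine ⟨fun h => ?_, fun h hA' => hU.mem_of_subset (hU.inter_mem hACA h hA') hB
    fun a ⟨hab, ha⟩ => hab ha⟩
  rcases hU.mem_or_compl_mem hACA hA with hA' | hA'
  · exact hU.mem_of_subset (h hA') hAB fun a hb _ => hb
  · exact hU.mem_of_subset hA' hAB fun a ha ha' => (ha ha').elim

end IsUltraOn

/-! ### The coded diagram -/

/-- `C` codes the elementary diagram of `K0`, as given by the arithmetized completeness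
theorem. -/
def CodesDiagram {M : Type} (S K0 : AStr M) (C : Set M) : Prop :=
  ∀ (φ : Fml) (l : ℕ) (v : ℕ → M), Fml.IsFO φ → φ.freeN ⊆ Finset.range l →
    (SatFO K0 v φ ↔ ∃ s p, S.SeqLen s (S.num l) ∧ (∀ i < l, S.SeqAt s (S.num i) (v i)) ∧
      S.PairRel p (S.num (Fml.code φ)) s ∧ p ∈ C)

namespace CodesDiagram

variable {M : Type} {S K0 : AStr M} {𝔛 : Set (Set M)} {C : Set M} {c : ℕ → M → M}

theorem isArithmetical_satFO (hdiag : CodesDiagram S K0 C) (hC : C ∈ 𝔛)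
    (hc : ∀ i, S.CodedFun 𝔛 (c i)) {φ : Fml} (hφ : φ.IsFO) (x : ℕ) :
    IsArithmetical S 𝔛 fun v => SatFO K0 (Function.update (fun i => c i (v 0)) x (v 1)) φ := by
  -- slots: `a, b`, then the sequence `s`, the pair `p` and an entry of `s`
  have h𝔛 : 𝔛.Nonempty := ⟨C, hC⟩
  set l := φ.freeN.sup id + 1
  have hl : φ.freeN ⊆ Finset.range l := fun i hi =>
    Finset.mem_range.mpr (Nat.lt_succ_of_le (Finset.le_sup (f := id) hi))
  have hentry : ∀ i < l, IsArithmetical S 𝔛 fun v =>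
      S.SeqAt (v 2) (S.num i) (Function.update (fun i => c i (v 0)) x (v 1) i) := by
    intro i _
    by_cases hix : i = x
    · subst hix
      exact (IsArithmetical.seqAt h𝔛 (.var 2) (numeral i) (.var 1)).of_iff fun v => by
        simp [PTerm.val, numeral_val]
    · exact ((((hc i).isArithmetical.substVars fun j => if j = 0 then .var 0 else .var 4).and
        (IsArithmetical.seqAt h𝔛 (.var 2) (numeral i) (.var 4))).exists_update 4).of_iff fun v => by
          simp [PTerm.val, numeral_val, hix]
  refine (((((IsArithmetical.seqLen h𝔛 (.var 2) (numeral l)).and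
    ((IsArithmetical.forall_lt h𝔛 l hentry).and
      ((IsArithmetical.pairRel h𝔛 (.var 3) (numeral φ.code) (.var 2)).and
        (IsArithmetical.mem (.var 3) hC)))).exists_update 3).exists_update 2).of_iff fun v => ?_)
  rw [hdiag φ l _ hφ hl]
  simp [PTerm.val, numeral_val]

theorem setOf_satFO_mem (hACA : SatACA0 S 𝔛) (hdiag : CodesDiagram S K0 C) (hC : C ∈ 𝔛)
    (hc : ∀ i, S.CodedFun 𝔛 (c i)) {φ : Fml} (hφ : φ.IsFO) :
    {a | SatFO K0 (fun i => c i a) φ} ∈ 𝔛 := by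
  obtain ⟨x, hx⟩ := Infinite.exists_notMem_finset φ.freeN
  convert (hdiag.isArithmetical_satFO hC hc hφ x).setOf_mem hACA using 3 with a
  exact Fml.satFO_congr _ φ fun i hi => by simp [Function.update_of_ne (ne_of_mem_of_not_mem hi hx)]

theorem codedFun_val (hACA : SatACA0 S 𝔛) (hdiag : CodesDiagram S K0 C) (hC : C ∈ 𝔛)
    (hc : ∀ i, S.CodedFun 𝔛 (c i)) (t : PTerm) :
    S.CodedFun 𝔛 fun a => t.val K0 fun i => c i a := by
  obtain ⟨x, hx⟩ := Infinite.exists_notMem_finset t.vars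
  exact hACA.codedFun_of_isArithmetical
    ((hdiag.isArithmetical_satFO hC hc (φ := .eq t (.var x)) trivial x).of_iff fun v => by
      simp [SatFO, Sat, PTerm.val, PTerm.val_update_of_notMem K0 hx])

theorem exists_codedFun_not_satFO (hACA : SatACA0 S 𝔛) (hdiag : CodesDiagram S K0 C)
    (hC : C ∈ 𝔛) (hc : ∀ i, S.CodedFun 𝔛 (c i)) {φ : Fml} (hφ : φ.IsFO) (x : ℕ) :
    ∃ g : M → M, S.CodedFun 𝔛 g ∧ ∀ a b,
      ¬ SatFO K0 (Function.update (fun i => c i a) x b) φ →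
        ¬ SatFO K0 (Function.update (fun i => c i a) x (g a)) φ :=
  hACA.exists_codedFun_of_isArithmetical
    (R := fun a b => ¬ SatFO K0 (Function.update (fun i => c i a) x b) φ)
    (hdiag.isArithmetical_satFO hC hc hφ x).not

end CodesDiagram

structure AStr.IsIso {M KT : Type} (K : AStr KT) (K0 : AStr M) (ϱ : KT → M) : Prop where
  bijective : Function.Bijective ϱ
  map_zero : ϱ K.zero = K0.zero
  map_one : ϱ K.one = K0.one
  map_add : ∀ a b, ϱ (K.add a b) = K0.add (ϱ a) (ϱ b)
  map_mul : ∀ a b, ϱ (K.mul a b) = K0.mul (ϱ a) (ϱ b)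
  lt_iff : ∀ a b, K.lt a b ↔ K0.lt (ϱ a) (ϱ b)

namespace AStr.IsIso

variable {M KT : Type} {K : AStr KT} {K0 : AStr M} {ϱ : KT → M}

theorem val (hϱ : K.IsIso K0 ϱ) (v : ℕ → KT) :
    ∀ t : PTerm, ϱ (t.val K v) = t.val K0 fun i => ϱ (v i)
  | .var _ => rfl
  | .zero => hϱ.map_zero
  | .one => hϱ.map_one
  | .add t u => by simp only [PTerm.val, hϱ.map_add, val hϱ v t, val hϱ v u]
  | .mul t u => by simp only [PTerm.val, hϱ.map_mul, val hϱ v t, val hϱ v u]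

theorem satFO_iff (hϱ : K.IsIso K0 ϱ) :
    ∀ {φ : Fml}, φ.IsFO → ∀ v : ℕ → KT, SatFO K v φ ↔ SatFO K0 (fun i => ϱ (v i)) φ
  | .eq t u, _, v => by
      simp only [SatFO, Sat, ← hϱ.val]; exact hϱ.bijective.injective.eq_iff.symm
  | .lt t u, _, v => by simp only [SatFO, Sat, ← hϱ.val]; exact hϱ.lt_iff _ _
  | .not φ, h, v => not_congr (satFO_iff hϱ (φ := φ) h v)
  | .imp φ ψ, h, v => imp_congr (satFO_iff hϱ (φ := φ) h.1 v) (satFO_iff hϱ (φ := ψ) h.2 v)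
  | .all x φ, h, v => (forall_congr' fun a => by
      simpa only [SatFO, Function.apply_update (fun _ => ϱ)] using
        satFO_iff hϱ (φ := φ) h (Function.update v x a)).trans
        hϱ.bijective.surjective.forall.symm

end AStr.IsIso

/-- The paper's `∏_𝔛 K`. -/
def AStr.restrictedProd {M KT : Type} (S : AStr M) (𝔛 : Set (Set M)) (ϱ : KT → M) :
    Set (M → KT) :=
  {f | S.CodedFun 𝔛 fun a => ϱ (f a)}

namespace CodesDiagram

variable {M KT : Type} {S K0 : AStr M} {𝔛 : Set (Set M)} {C : Set M} {K : AStr KT}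
  {ϱ : KT → M} {f : ℕ → M → KT}

theorem setOf_satFO_mem_of_iso (hACA : SatACA0 S 𝔛) (hdiag : CodesDiagram S K0 C)
    (hC : C ∈ 𝔛) (hϱ : K.IsIso K0 ϱ) (hf : ∀ i, f i ∈ S.restrictedProd 𝔛 ϱ) {φ : Fml}
    (hφ : φ.IsFO) : {a | SatFO K (fun i => f i a) φ} ∈ 𝔛 := by
  simpa only [hϱ.satFO_iff hφ] using hdiag.setOf_satFO_mem hACA hC hf hφ

theorem val_mem_restrictedProd (hACA : SatACA0 S 𝔛) (hdiag : CodesDiagram S K0 C)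
    (hC : C ∈ 𝔛) (hϱ : K.IsIso K0 ϱ) (hf : ∀ i, f i ∈ S.restrictedProd 𝔛 ϱ) (t : PTerm) :
    (fun a => t.val K fun i => f i a) ∈ S.restrictedProd 𝔛 ϱ := by
  change S.CodedFun 𝔛 fun a => ϱ (t.val K fun i => f i a)
  simpa only [hϱ.val] using hdiag.codedFun_val hACA hC hf t

theorem exists_skolem (hACA : SatACA0 S 𝔛) (hdiag : CodesDiagram S K0 C) (hC : C ∈ 𝔛)
    (hϱ : K.IsIso K0 ϱ) (hf : ∀ i, f i ∈ S.restrictedProd 𝔛 ϱ) {φ : Fml} (hφ : φ.IsFO)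
    (x : ℕ) : ∃ g ∈ S.restrictedProd 𝔛 ϱ, ∀ a k,
      ¬ SatFO K (Function.update (fun i => f i a) x k) φ →
        ¬ SatFO K (Function.update (fun i => f i a) x (g a)) φ := by
  obtain ⟨g₀, hg₀, hg₀φ⟩ := hdiag.exists_codedFun_not_satFO hACA hC hf hφ x
  have hg : ∀ a, ϱ (Function.surjInv hϱ.bijective.surjective (g₀ a)) = g₀ a := fun a =>
    Function.surjInv_eq _ _
  refine ⟨fun a => Function.surjInv hϱ.bijective.surjective (g₀ a), by
    simpa only [AStr.restrictedProd, Set.mem_ofPred_eq, hg] using hg₀, fun a k hk => ?_⟩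
  simp only [hϱ.satFO_iff hφ, Function.apply_update (fun _ => ϱ), hg] at hk ⊢
  exact hg₀φ a _ hk

end CodesDiagram

/-! ### Łoś's theorem -/

/-- `π` presents `N` as the restricted ultrapower `∏_𝔛 K / U`. -/
structure IsRestrictedUltrapower {M KT NT : Type} (S : AStr M) (𝔛 : Set (Set M))
    (K : AStr KT) (ϱ : KT → M) (U : Set (Set M)) (SN : AStr NT) (π : (M → KT) → NT) :
    Prop where
  surj : ∀ n : NT, ∃ f ∈ S.restrictedProd 𝔛 ϱ, π f = n
  eq_iff : ∀ f g, f ∈ S.restrictedProd 𝔛 ϱ → g ∈ S.restrictedProd 𝔛 ϱ →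
    (π f = π g ↔ {a | f a = g a} ∈ U)
  zero : ∀ f ∈ S.restrictedProd 𝔛 ϱ, (∀ a, f a = K.zero) → π f = SN.zero
  one : ∀ f ∈ S.restrictedProd 𝔛 ϱ, (∀ a, f a = K.one) → π f = SN.one
  add : ∀ f g h, f ∈ S.restrictedProd 𝔛 ϱ → g ∈ S.restrictedProd 𝔛 ϱ →
    h ∈ S.restrictedProd 𝔛 ϱ → (∀ a, h a = K.add (f a) (g a)) → SN.add (π f) (π g) = π h
  mul : ∀ f g h, f ∈ S.restrictedProd 𝔛 ϱ → g ∈ S.restrictedProd 𝔛 ϱ →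
    h ∈ S.restrictedProd 𝔛 ϱ → (∀ a, h a = K.mul (f a) (g a)) → SN.mul (π f) (π g) = π h
  lt_iff : ∀ f g, f ∈ S.restrictedProd 𝔛 ϱ → g ∈ S.restrictedProd 𝔛 ϱ →
    (SN.lt (π f) (π g) ↔ {a | K.lt (f a) (g a)} ∈ U)

namespace IsRestrictedUltrapower

variable {M KT NT : Type} {S : AStr M} {𝔛 : Set (Set M)} {K : AStr KT} {ϱ : KT → M}
  {U : Set (Set M)} {SN : AStr NT} {π : (M → KT) → NT} {K0 : AStr M} {C : Set M}

theorem map_val (hN : IsRestrictedUltrapower S 𝔛 K ϱ U SN π) (hACA : SatACA0 S 𝔛)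
    (hdiag : CodesDiagram S K0 C) (hC : C ∈ 𝔛) (hϱ : K.IsIso K0 ϱ) {f : ℕ → M → KT}
    (hf : ∀ i, f i ∈ S.restrictedProd 𝔛 ϱ) (t : PTerm) :
    π (fun a => t.val K fun i => f i a) = t.val SN fun i => π (f i) := by
  have hmem := hdiag.val_mem_restrictedProd hACA hC hϱ hf
  induction t with
  | var _ => rfl
  | zero => exact hN.zero _ (hmem .zero) fun _ => rfl
  | one => exact hN.one _ (hmem .one) fun _ => rfl
  | add t u iht ihu =>
      rw [PTerm.val, ← iht, ← ihu]
      exact (hN.add _ _ _ (hmem t) (hmem u) (hmem (.add t u)) fun _ => rfl).symm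
  | mul t u iht ihu =>
      rw [PTerm.val, ← iht, ← ihu]
      exact (hN.mul _ _ _ (hmem t) (hmem u) (hmem (.mul t u)) fun _ => rfl).symm

theorem satFO_all_iff (hN : IsRestrictedUltrapower S 𝔛 K ϱ U SN π) (hACA : SatACA0 S 𝔛)
    (hdiag : CodesDiagram S K0 C) (hC : C ∈ 𝔛) (hϱ : K.IsIso K0 ϱ)
    (hU : IsUltraOn (S.PX 𝔛) U) {φ : Fml} (hφ : φ.IsFO) (x : ℕ)
    (ih : ∀ f : ℕ → M → KT, (∀ i, f i ∈ S.restrictedProd 𝔛 ϱ) →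
      (SatFO SN (fun i => π (f i)) φ ↔ {a | SatFO K (fun i => f i a) φ} ∈ U))
    {f : ℕ → M → KT} (hf : ∀ i, f i ∈ S.restrictedProd 𝔛 ϱ) :
    SatFO SN (fun i => π (f i)) (.all x φ) ↔ {a | SatFO K (fun i => f i a) (.all x φ)} ∈ U := by
  have hupdate : ∀ g ∈ S.restrictedProd 𝔛 ϱ, ∀ i,
      Function.update f x g i ∈ S.restrictedProd 𝔛 ϱ :=
    fun g hg i => by by_cases hi : i = x <;> simp [hi, hg, hf i]
  have hval : ∀ (g : M → KT) a,
      (fun i => Function.update f x g i a) = Function.update (fun i => f i a) x (g a) :=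
    fun g a => funext (Function.apply_update (fun _ h => h a) f x g)
  have hvalN : ∀ g : M → KT,
      (fun i => π (Function.update f x g i)) = Function.update (fun i => π (f i)) x (π g) :=
    fun g => funext (Function.apply_update (fun _ => π) f x g)
  have ih' : ∀ g ∈ S.restrictedProd 𝔛 ϱ,
      SatFO SN (Function.update (fun i => π (f i)) x (π g)) φ ↔
        {a | SatFO K (Function.update (fun i => f i a) x (g a)) φ} ∈ U := fun g hg => by
    simpa only [hvalN, hval] using ih _ (hupdate g hg)
  constructor
  · intro hall
    by_contra hnot
    have hB := hdiag.setOf_satFO_mem_of_iso hACA hC hϱ hf (φ := .all x φ) hφ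
    obtain ⟨g, hg, hgφ⟩ := hdiag.exists_skolem hACA hC hϱ hf hφ x
    obtain ⟨a, ⟨hga, hna⟩, -⟩ := hU.unb (hU.inter_mem hACA ((ih' g hg).mp (hall (π g)))
      ((hU.compl_mem_iff hACA hB).mpr hnot)) S.zero
    obtain ⟨k, hk⟩ := not_forall.mp hna
    exact hgφ a k hk hga
  · intro hall n
    obtain ⟨g, hg, rfl⟩ := hN.surj n
    have hg𝔛 := hdiag.setOf_satFO_mem_of_iso hACA hC hϱ (hupdate g hg) hφ
    simp only [hval] at hg𝔛
    exact (ih' g hg).mpr (hU.mem_of_subset hall hg𝔛 fun a ha => ha (g a))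

/-- Łoś's theorem for the restricted ultrapower. -/
theorem satFO_iff (hN : IsRestrictedUltrapower S 𝔛 K ϱ U SN π) (hACA : SatACA0 S 𝔛)
    (hdiag : CodesDiagram S K0 C) (hC : C ∈ 𝔛) (hϱ : K.IsIso K0 ϱ)
    (hU : IsUltraOn (S.PX 𝔛) U) :
    ∀ {φ : Fml}, φ.IsFO → ∀ {f : ℕ → M → KT}, (∀ i, f i ∈ S.restrictedProd 𝔛 ϱ) →
      (SatFO SN (fun i => π (f i)) φ ↔ {a | SatFO K (fun i => f i a) φ} ∈ U)
  | .eq t u, _, f, hf => by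
      have hmem := hdiag.val_mem_restrictedProd hACA hC hϱ hf
      change t.val SN _ = u.val SN _ ↔ _
      rw [← hN.map_val hACA hdiag hC hϱ hf, ← hN.map_val hACA hdiag hC hϱ hf,
        hN.eq_iff _ _ (hmem t) (hmem u)]
      rfl
  | .lt t u, _, f, hf => by
      have hmem := hdiag.val_mem_restrictedProd hACA hC hϱ hf
      change SN.lt (t.val SN _) (u.val SN _) ↔ _
      rw [← hN.map_val hACA hdiag hC hϱ hf, ← hN.map_val hACA hdiag hC hϱ hf,
        hN.lt_iff _ _ (hmem t) (hmem u)]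
      rfl
  | .not φ, h, f, hf => by
      change ¬ SatFO SN _ φ ↔ _
      rw [satFO_iff hN hACA hdiag hC hϱ hU (φ := φ) h hf,
        ← hU.compl_mem_iff hACA (hdiag.setOf_satFO_mem_of_iso hACA hC hϱ hf (φ := φ) h)]
      rfl
  | .imp φ ψ, h, f, hf => by
      change (SatFO SN _ φ → SatFO SN _ ψ) ↔ _
      rw [satFO_iff hN hACA hdiag hC hϱ hU (φ := φ) h.1 hf,
        satFO_iff hN hACA hdiag hC hϱ hU (φ := ψ) h.2 hf,
        hU.imp_mem_iff hACA (hdiag.setOf_satFO_mem_of_iso hACA hC hϱ hf h.1)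
          (hdiag.setOf_satFO_mem_of_iso hACA hC hϱ hf h.2)]
      rfl
  | .all x φ, h, _, hf => hN.satFO_all_iff hACA hdiag hC hϱ hU (φ := φ) h x
      (fun _ hf' => satFO_iff hN hACA hdiag hC hϱ hU (φ := φ) h hf') hf

end IsRestrictedUltrapower

theorem restricted_ultrapower_canonical_embedding_elementary_general
    {M KT NT : Type} (S : AStr M) (𝔛 : Set (Set M)) (T : Set Fml)
    (K : AStr KT) (K0 : AStr M) (C : Set M) (ϱ : KT → M)
    (U : Set (Set M)) (SN : AStr NT) (π : (M → KT) → NT)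
    -- the second-order structure (M,𝔛) ⊨ ACA₀
    (hACA : SatACA0 S 𝔛)
    -- T ⊇ PA is a theory coded in 𝔛 with M ⊨ Con_T
    (hSent : ∀ φ ∈ T, IsFOSentence φ)
    -- K₀ ⊨ T has domain M and its elementary diagram is coded by C ∈ 𝔛
    (hK0T : ModelsT K0 T) (hC : C ∈ 𝔛)
    (hdiag : ∀ (φ : Fml) (l : ℕ) (v : ℕ → M), Fml.IsFO φ → φ.freeN ⊆ Finset.range l →
      (SatFO K0 v φ ↔ ∃ s p, S.SeqLen s (S.num l) ∧ (∀ i < l, S.SeqAt s (S.num i) (v i)) ∧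
        S.PairRel p (S.num (Fml.code φ)) s ∧ p ∈ C))
    -- ϱ : K ≅ K₀ is an isomorphism
    (hrbij : Function.Bijective ϱ)
    (hr0 : ϱ K.zero = K0.zero) (hr1 : ϱ K.one = K0.one)
    (hradd : ∀ a b, ϱ (K.add a b) = K0.add (ϱ a) (ϱ b))
    (hrmul : ∀ a b, ϱ (K.mul a b) = K0.mul (ϱ a) (ϱ b))
    (hrlt : ∀ a b, K.lt a b ↔ K0.lt (ϱ a) (ϱ b))
    -- U is an ultrafilter on P_𝔛
    (hU : IsUltraOn (S.PX 𝔛) U)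
    -- (NT, SN, π) realizes the restricted ultrapower N = ∏_𝔛 K / U :
    -- π maps ∏_𝔛 K (the functions f with ϱ ∘ f coded in 𝔛) onto N,
    -- identifying f and g exactly when they agree on a set in U
    (hsurj : ∀ n : NT, ∃ f : M → KT, S.CodedFun 𝔛 (fun a => ϱ (f a)) ∧ π f = n)
    (heq : ∀ f g : M → KT, S.CodedFun 𝔛 (fun a => ϱ (f a)) →
      S.CodedFun 𝔛 (fun a => ϱ (g a)) → (π f = π g ↔ {a : M | f a = g a} ∈ U))
    (hzero : ∀ f : M → KT, S.CodedFun 𝔛 (fun a => ϱ (f a)) → (∀ a, f a = K.zero) →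
      π f = SN.zero)
    (hone : ∀ f : M → KT, S.CodedFun 𝔛 (fun a => ϱ (f a)) → (∀ a, f a = K.one) →
      π f = SN.one)
    (hadd : ∀ f g h : M → KT, S.CodedFun 𝔛 (fun a => ϱ (f a)) →
      S.CodedFun 𝔛 (fun a => ϱ (g a)) → S.CodedFun 𝔛 (fun a => ϱ (h a)) →
      (∀ a, h a = K.add (f a) (g a)) → SN.add (π f) (π g) = π h)
    (hmul : ∀ f g h : M → KT, S.CodedFun 𝔛 (fun a => ϱ (f a)) →
      S.CodedFun 𝔛 (fun a => ϱ (g a)) → S.CodedFun 𝔛 (fun a => ϱ (h a)) →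
      (∀ a, h a = K.mul (f a) (g a)) → SN.mul (π f) (π g) = π h)
    (hlt : ∀ f g : M → KT, S.CodedFun 𝔛 (fun a => ϱ (f a)) →
      S.CodedFun 𝔛 (fun a => ϱ (g a)) →
      (SN.lt (π f) (π g) ↔ {a : M | K.lt (f a) (g a)} ∈ U)) :
    ∀ F : KT → NT,
      (∀ (k : KT) (f : M → KT), S.CodedFun 𝔛 (fun a => ϱ (f a)) → (∀ a, f a = k) →
        π f = F k) →
      (∀ (φ : Fml) (v : ℕ → KT), Fml.IsFO φ →
        (SatFO K v φ ↔ SatFO SN (fun k => F (v k)) φ)) ∧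
      ModelsT SN T := by
  intro F hF
  have hN : IsRestrictedUltrapower S 𝔛 K ϱ U SN π := ⟨hsurj, heq, hzero, hone, hadd, hmul, hlt⟩
  have hϱ : K.IsIso K0 ϱ := ⟨hrbij, hr0, hr1, hradd, hrmul, hrlt⟩
  have hconst (k : KT) : (fun _ => k) ∈ S.restrictedProd 𝔛 ϱ := hACA.codedFun_const ⟨C, hC⟩ (ϱ k)
  have hF' (v : ℕ → KT) : (fun i => F (v i)) = fun i => π fun _ => v i :=
    funext fun i => (hF _ _ (hconst (v i)) fun _ => rfl).symm
  have helem (φ : Fml) (v : ℕ → KT) (hφ : φ.IsFO) :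
      SatFO K v φ ↔ SatFO SN (fun k => F (v k)) φ := by
    rw [hF', hN.satFO_iff hACA hdiag hC hϱ hU hφ fun i => hconst (v i)]
    exact (hU.setOf_const_mem_iff hACA _).symm
  refine ⟨helem, fun φ hφT v => ?_⟩
  obtain ⟨hφ, hfree⟩ := hSent φ hφT
  have hK : SatFO K (fun _ => K.zero) φ := (hϱ.satFO_iff hφ _).mpr (hK0T φ hφT _)
  exact (Fml.satFO_congr SN φ fun i hi => by simp [hfree] at hi).mp ((helem φ _ hφ).mp hK)

/-- The canonical embedding `F : K → N = ∏_𝔛 K / U`, mapping `a` to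
the class of the constant function with value `a`, is elementary; consequently `N ⊨ T`. -/
theorem restricted_ultrapower_canonical_embedding_elementary
    {M KT NT : Type} (S : AStr M) (𝔛 : Set (Set M)) (T : Set Fml) (A : Set M)
    (K : AStr KT) (j : M → KT) (K0 : AStr M) (C : Set M) (ϱ : KT → M)
    (U : Set (Set M)) (SN : AStr NT) (π : (M → KT) → NT)
    -- the second-order structure (M,𝔛) ⊨ ACA₀
    (hACA : SatACA0 S 𝔛)
    -- T ⊇ PA is a theory coded in 𝔛 with M ⊨ Con_T
    (hSent : ∀ φ ∈ T, IsFOSentence φ) (hPA : PAax ⊆ T)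
    (hA : A ∈ 𝔛) (hTcode : ∀ n : ℕ, (S.num n ∈ A ↔ n ∈ theoryCode T))
    (hCon : S.SatConTheory T)
    -- M ⊆_e K : j embeds M onto an initial segment of K
    (hjinj : Function.Injective j)
    (hj0 : j S.zero = K.zero) (hj1 : j S.one = K.one)
    (hjadd : ∀ a b, j (S.add a b) = K.add (j a) (j b))
    (hjmul : ∀ a b, j (S.mul a b) = K.mul (j a) (j b))
    (hjlt : ∀ a b, S.lt a b ↔ K.lt (j a) (j b))
    (hjinit : ∀ (x : KT) (a : M), K.lt x (j a) → ∃ b : M, j b = x)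
    -- K₀ ⊨ T has domain M and its elementary diagram is coded by C ∈ 𝔛
    (hK0T : ModelsT K0 T) (hC : C ∈ 𝔛)
    (hdiag : ∀ (φ : Fml) (l : ℕ) (v : ℕ → M), Fml.IsFO φ → φ.freeN ⊆ Finset.range l →
      (SatFO K0 v φ ↔ ∃ s p, S.SeqLen s (S.num l) ∧ (∀ i < l, S.SeqAt s (S.num i) (v i)) ∧
        S.PairRel p (S.num (Fml.code φ)) s ∧ p ∈ C))
    -- ϱ : K ≅ K₀ is an isomorphism
    (hrbij : Function.Bijective ϱ)
    (hr0 : ϱ K.zero = K0.zero) (hr1 : ϱ K.one = K0.one)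
    (hradd : ∀ a b, ϱ (K.add a b) = K0.add (ϱ a) (ϱ b))
    (hrmul : ∀ a b, ϱ (K.mul a b) = K0.mul (ϱ a) (ϱ b))
    (hrlt : ∀ a b, K.lt a b ↔ K0.lt (ϱ a) (ϱ b))
    -- ϱ ∘ j is the canonical embedding of M into K₀, and it is coded in 𝔛
    (hcan0 : ϱ (j S.zero) = K0.zero)
    (hcansucc : ∀ a, ϱ (j (S.add a S.one)) = K0.add (ϱ (j a)) K0.one)
    (hcancod : S.CodedFun 𝔛 (fun a => ϱ (j a)))
    -- U is an ultrafilter on P_𝔛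
    (hU : IsUltraOn (S.PX 𝔛) U)
    -- (NT, SN, π) realizes the restricted ultrapower N = ∏_𝔛 K / U :
    -- π maps ∏_𝔛 K (the functions f with ϱ ∘ f coded in 𝔛) onto N,
    -- identifying f and g exactly when they agree on a set in U
    (hsurj : ∀ n : NT, ∃ f : M → KT, S.CodedFun 𝔛 (fun a => ϱ (f a)) ∧ π f = n)
    (heq : ∀ f g : M → KT, S.CodedFun 𝔛 (fun a => ϱ (f a)) →
      S.CodedFun 𝔛 (fun a => ϱ (g a)) → (π f = π g ↔ {a : M | f a = g a} ∈ U))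
    (hzero : ∀ f : M → KT, S.CodedFun 𝔛 (fun a => ϱ (f a)) → (∀ a, f a = K.zero) →
      π f = SN.zero)
    (hone : ∀ f : M → KT, S.CodedFun 𝔛 (fun a => ϱ (f a)) → (∀ a, f a = K.one) →
      π f = SN.one)
    (hadd : ∀ f g h : M → KT, S.CodedFun 𝔛 (fun a => ϱ (f a)) →
      S.CodedFun 𝔛 (fun a => ϱ (g a)) → S.CodedFun 𝔛 (fun a => ϱ (h a)) →
      (∀ a, h a = K.add (f a) (g a)) → SN.add (π f) (π g) = π h)
    (hmul : ∀ f g h : M → KT, S.CodedFun 𝔛 (fun a => ϱ (f a)) →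
      S.CodedFun 𝔛 (fun a => ϱ (g a)) → S.CodedFun 𝔛 (fun a => ϱ (h a)) →
      (∀ a, h a = K.mul (f a) (g a)) → SN.mul (π f) (π g) = π h)
    (hlt : ∀ f g : M → KT, S.CodedFun 𝔛 (fun a => ϱ (f a)) →
      S.CodedFun 𝔛 (fun a => ϱ (g a)) →
      (SN.lt (π f) (π g) ↔ {a : M | K.lt (f a) (g a)} ∈ U)) :
    ∀ F : KT → NT,
      (∀ (k : KT) (f : M → KT), S.CodedFun 𝔛 (fun a => ϱ (f a)) → (∀ a, f a = k) →
        π f = F k) →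
      (∀ (φ : Fml) (v : ℕ → KT), Fml.IsFO φ →
        (SatFO K v φ ↔ SatFO SN (fun k => F (v k)) φ)) ∧
      ModelsT SN T :=
  restricted_ultrapower_canonical_embedding_elementary_general S 𝔛 T K K0 C ϱ U SN π hACA hSent hK0T
    hC hdiag hrbij hr0 hr1 hradd hrmul hrlt hU hsurj heq hzero hone hadd hmul hlt

end Paper
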